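/- arXiv:2603.26002 — 8 statements merged into one kernel-verified Lean document; each statement's English description precedes it below -/
import Mathlib

section
/- Let ψ(u) = exp(a u^β) with a > 0, β > 0, and let ξ ∈ F_ψ(Ω). Then for every ε ≥ e^{a(β+1)} ‖ξ‖_ψ, P(|ξ| > ε) ≤ exp( −(β / a^{1/β}) · ( ln(ε/‖ξ‖_ψ) / (β+1) )^{(β+1)/β} ). -/
open MeasureTheory Real Filter

noncomputable def Fnorm {Ω : Type*} [MeasurableSpace Ω] (μ : Measure Ω)
    (ψ : ℝ → ℝ) (ξ : Ω → ℝ) : ℝ :=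
  ⨆ u : {u : ℝ // 1 ≤ u}, (∫ ω, |ξ ω| ^ u.1 ∂μ) ^ (1 / u.1) / ψ u.1

/-- Membership in the space `F_ψ(Ω)`: all moments of order `u ≥ 1` are finite and the
defining supremum is finite (bounded above). -/
def MemF {Ω : Type*} [MeasurableSpace Ω] (μ : Measure Ω) (ψ : ℝ → ℝ) (ξ : Ω → ℝ) : Prop :=
  (∀ u : ℝ, 1 ≤ u → Integrable (fun ω => |ξ ω| ^ u) μ) ∧
    BddAbove (Set.range fun u : {u : ℝ // 1 ≤ u} =>
      (∫ ω, |ξ ω| ^ u.1 ∂μ) ^ (1 / u.1) / ψ u.1)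

theorem stmt2 {Ω : Type*} [MeasurableSpace Ω] (μ : Measure Ω) [IsProbabilityMeasure μ]
    (a β : ℝ) (ha : 0 < a) (hβ : 0 < β)
    (ξ : Ω → ℝ) (hmem : MemF μ (fun u => Real.exp (a * u ^ β)) ξ)
    (ε : ℝ)
    (hε : Real.exp (a * (β + 1)) * Fnorm μ (fun u => Real.exp (a * u ^ β)) ξ ≤ ε) :
    (μ {ω | ε < |ξ ω|}).toReal ≤
      Real.exp (-(β / a ^ (1 / β)) *
        (Real.log (ε / Fnorm μ (fun u => Real.exp (a * u ^ β)) ξ) / (β + 1)) ^ ((β + 1) / β)) := by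
  set ψ : ℝ → ℝ := fun u => Real.exp (a * u ^ β) with hψdef
  set N := Fnorm μ ψ ξ with hNdef
  obtain ⟨hint, hbdd⟩ := hmem
  -- Fact A : for all u ≥ 1, (∫|ξ|^u)^{1/u} ≤ N * ψ u
  have factA : ∀ u : ℝ, 1 ≤ u → (∫ ω, |ξ ω| ^ u ∂μ) ^ (1 / u) ≤ N * ψ u := by
    intro u hu
    have h1 : (∫ ω, |ξ ω| ^ u ∂μ) ^ (1 / u) / ψ u ≤ N := le_ciSup hbdd ⟨u, hu⟩
    have hψpos : 0 < ψ u := Real.exp_pos _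
    calc (∫ ω, |ξ ω| ^ u ∂μ) ^ (1 / u)
        = ((∫ ω, |ξ ω| ^ u ∂μ) ^ (1 / u) / ψ u) * ψ u := by field_simp
      _ ≤ N * ψ u := mul_le_mul_of_nonneg_right h1 hψpos.le
  have hNnonneg : 0 ≤ N := by
    have h0 : (0:ℝ) ≤ (∫ ω, |ξ ω| ^ (1:ℝ) ∂μ) ^ (1 / (1:ℝ)) / ψ 1 :=
      div_nonneg (Real.rpow_nonneg (integral_nonneg fun ω =>
        Real.rpow_nonneg (abs_nonneg _) _) _) (Real.exp_pos _).le
    exact le_trans h0 (le_ciSup hbdd ⟨1, le_refl 1⟩)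
  rcases eq_or_lt_of_le hNnonneg with hN0 | hNpos
  · -- N = 0 : ξ = 0 a.e.
    have hεnn : 0 ≤ ε := le_trans (by rw [← hN0]; positivity) hε
    have h1 : (∫ ω, |ξ ω| ∂μ) ≤ 0 := by
      have h := factA 1 le_rfl
      rw [← hN0, zero_mul] at h
      simpa [Real.rpow_one] using h
    have hzero : ∫ ω, |ξ ω| ∂μ = 0 :=
      le_antisymm h1 (integral_nonneg fun ω => abs_nonneg _)
    have hint1 : Integrable (fun ω => |ξ ω|) μ := by
      have := hint 1 le_rfl
      simpa [Real.rpow_one] using this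
    have hae : ∀ᵐ ω ∂μ, |ξ ω| = 0 := by
      have := (integral_eq_zero_iff_of_nonneg (fun ω => abs_nonneg _) hint1).mp hzero
      filter_upwards [this.le] with ω hω using le_antisymm hω (abs_nonneg _)
    have hnull : μ {ω | ε < |ξ ω|} = 0 := by
      refine measure_mono_null (fun ω hω => ?_) (ae_iff.mp hae)
      simp only [Set.mem_setOf_eq] at hω ⊢
      exact ne_of_gt (lt_of_le_of_lt hεnn hω)
    rw [hnull]
    simpa using (Real.exp_pos _).le
  · -- N > 0
    have hεpos : 0 < ε := lt_of_lt_of_le (by positivity) hε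
    set L := Real.log (ε / N) with hLdef
    have hratio : Real.exp (a * (β + 1)) ≤ ε / N := (le_div_iff₀ hNpos).mpr (by linarith [hε])
    have hL : a * (β + 1) ≤ L :=
      (Real.le_log_iff_exp_le (by positivity)).mpr hratio
    have hLpos : 0 < L := lt_of_lt_of_le (by positivity) hL
    set b := L / (a * (β + 1)) with hbdef
    have hbpos : 0 < b := div_pos hLpos (by positivity)
    have hb1 : 1 ≤ b := (one_le_div (by positivity)).mpr hL
    set u := b ^ (1 / β) with hudef
    have hu1 : 1 ≤ u := by
      calc (1:ℝ) = 1 ^ (1/β) := (Real.one_rpow _).symm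
        _ ≤ b ^ (1/β) := Real.rpow_le_rpow zero_le_one hb1 (by positivity)
    have hupos : 0 < u := lt_of_lt_of_le one_pos hu1
    have hub : u ^ β = b := by
      rw [hudef, ← Real.rpow_mul hbpos.le, one_div, inv_mul_cancel₀ hβ.ne', Real.rpow_one]
    -- Markov
    have hmarkov : (ε ^ u) * (μ {ω | ε ^ u ≤ |ξ ω| ^ u}).toReal ≤ ∫ ω, |ξ ω| ^ u ∂μ :=
      mul_meas_ge_le_integral_of_nonneg
        (Filter.Eventually.of_forall fun ω => Real.rpow_nonneg (abs_nonneg _) _)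
        (hint u hu1) _
    have hsub : μ {ω | ε < |ξ ω|} ≤ μ {ω | ε ^ u ≤ |ξ ω| ^ u} := by
      refine measure_mono fun ω hω => ?_
      simp only [Set.mem_setOf_eq] at hω ⊢
      exact Real.rpow_le_rpow hεpos.le hω.le hupos.le
    have hεu : 0 < ε ^ u := Real.rpow_pos_of_pos hεpos _
    have hmono : (μ {ω | ε < |ξ ω|}).toReal ≤ (μ {ω | ε ^ u ≤ |ξ ω| ^ u}).toReal :=
      ENNReal.toReal_mono (measure_ne_top μ _) hsub
    have hstep1 : (μ {ω | ε < |ξ ω|}).toReal ≤ (∫ ω, |ξ ω| ^ u ∂μ) / ε ^ u := by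
      rw [le_div_iff₀ hεu]
      calc (μ {ω | ε < |ξ ω|}).toReal * ε ^ u
          ≤ (μ {ω | ε ^ u ≤ |ξ ω| ^ u}).toReal * ε ^ u :=
            mul_le_mul_of_nonneg_right hmono hεu.le
        _ = ε ^ u * (μ {ω | ε ^ u ≤ |ξ ω| ^ u}).toReal := mul_comm _ _
        _ ≤ ∫ ω, |ξ ω| ^ u ∂μ := hmarkov
    -- Moment bound
    have hintnn : 0 ≤ ∫ ω, |ξ ω| ^ u ∂μ := integral_nonneg fun ω => Real.rpow_nonneg (abs_nonneg _) _
    have hmom : (∫ ω, |ξ ω| ^ u ∂μ) ≤ (N * ψ u) ^ u := by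
      have h := factA u hu1
      have h2 : ((∫ ω, |ξ ω| ^ u ∂μ) ^ (1/u)) ^ u ≤ (N * ψ u) ^ u :=
        Real.rpow_le_rpow (Real.rpow_nonneg hintnn _) h hupos.le
      rwa [← Real.rpow_mul hintnn, one_div, inv_mul_cancel₀ hupos.ne', Real.rpow_one] at h2
    have hNψpos : 0 < N * ψ u := mul_pos hNpos (Real.exp_pos _)
    have hstep2 : (μ {ω | ε < |ξ ω|}).toReal ≤ (N * ψ u / ε) ^ u := by
      rw [Real.div_rpow hNψpos.le hεpos.le]
      exact le_trans hstep1 (div_le_div_of_nonneg_right hmom hεu.le)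
    -- rewrite the bound as an exponential
    have hquotpos : 0 < N * ψ u / ε := div_pos hNψpos hεpos
    have hlog : Real.log (N * ψ u / ε) = L / (β + 1) - L := by
      rw [Real.log_div hNψpos.ne' hεpos.ne', Real.log_mul hNpos.ne' (Real.exp_pos _).ne']
      have hψu : Real.log (ψ u) = a * u ^ β := by
        simp [hψdef, Real.log_exp]
      rw [hψu, hub, hbdef, hLdef, Real.log_div hεpos.ne' hNpos.ne']
      field_simp
      ring
    have hexp : (N * ψ u / ε) ^ u = Real.exp ((L / (β + 1) - L) * u) := by
      rw [Real.rpow_def_of_pos hquotpos, hlog]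
    -- exponent algebra
    have hueq : u = (L / (β + 1)) ^ (1/β) / a ^ (1/β) := by
      rw [hudef, hbdef]
      rw [show L / (a * (β + 1)) = (L / (β + 1)) / a by rw [div_div, mul_comm]]
      exact Real.div_rpow (by positivity) ha.le _
    have hexpo : (L / (β + 1) - L) * u =
        -(β / a ^ (1 / β)) * (L / (β + 1)) ^ ((β + 1) / β) := by
      have hsplit : (L / (β + 1)) ^ ((β + 1) / β)
          = (L / (β + 1)) * (L / (β + 1)) ^ (1/β) := by
        rw [show (β + 1) / β = 1 + 1/β by field_simp, Real.rpow_add (by positivity),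
          Real.rpow_one]
      rw [hsplit, hueq]
      have hane : a ^ (1/β) ≠ 0 := (Real.rpow_pos_of_pos ha _).ne'
      field_simp
      ring
    calc (μ {ω | ε < |ξ ω|}).toReal ≤ (N * ψ u / ε) ^ u := hstep2
      _ = Real.exp ((L / (β + 1) - L) * u) := hexp
      _ = Real.exp (-(β / a ^ (1 / β)) * (L / (β + 1)) ^ ((β + 1) / β)) := by rw [hexpo]
end

section
/- For any random variables ξ₁,…,ξₙ in F_ψ(Ω), ‖max_{1≤i≤n}|ξ_i|‖_ψ ≤ κ(n) · max_{1≤i≤n} ‖ξ_i‖_ψ, where κ(n) = sup_{u≥1} inf_{v>0} n^{1/(u+v)} ψ(u+v)/ψ(u). -/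
open MeasureTheory Real Filter

section helper
variable {Ω : Type*} [MeasurableSpace Ω] (μ : Measure Ω) [IsProbabilityMeasure μ]

lemma lyapunov (f : Ω → ℝ) (hf : ∀ ω, 0 ≤ f ω) (p q : ℝ) (hp : 0 < p) (hpq : p ≤ q)
    (hfp : Integrable (fun ω => f ω ^ p) μ) (hfq : Integrable (fun ω => f ω ^ q) μ) :
    (∫ ω, f ω ^ p ∂μ) ^ (1/p) ≤ (∫ ω, f ω ^ q ∂μ) ^ (1/q) := by
  have hq : 0 < q := lt_of_lt_of_le hp hpq
  set r := q / p with hr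
  have hr1 : 1 ≤ r := (one_le_div hp).2 hpq
  have hr0 : 0 ≤ r := by linarith
  have hpr : p * r = q := by rw [hr]; field_simp
  have hcomp : ((fun t : ℝ => t ^ r) ∘ (fun ω => f ω ^ p)) = fun ω => f ω ^ q := by
    funext ω
    show (f ω ^ p) ^ r = f ω ^ q
    rw [← Real.rpow_mul (hf ω), hpr]
  have hJ : (∫ ω, f ω ^ p ∂μ) ^ r ≤ ∫ ω, (f ω ^ p) ^ r ∂μ := by
    have := (convexOn_rpow hr1).map_integral_le
      (continuousOn_id.rpow_const fun x _ => Or.inr hr0) isClosed_Ici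
      (ae_of_all _ fun ω => Real.rpow_nonneg (hf ω) p) hfp (by rw [hcomp]; exact hfq)
    simpa using this
  have hx0 : 0 ≤ ∫ ω, f ω ^ p ∂μ := integral_nonneg fun ω => Real.rpow_nonneg (hf ω) p
  have hrq : r * (1/q) = 1/p := by rw [hr]; field_simp
  calc (∫ ω, f ω ^ p ∂μ) ^ (1/p) = ((∫ ω, f ω ^ p ∂μ) ^ r) ^ (1/q) := by
        rw [← Real.rpow_mul hx0, hrq]
    _ ≤ (∫ ω, (f ω ^ p) ^ r ∂μ) ^ (1/q) :=
        Real.rpow_le_rpow (Real.rpow_nonneg hx0 r) hJ (by positivity)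
    _ = (∫ ω, f ω ^ q ∂μ) ^ (1/q) := by
        congr 1
        refine integral_congr_ae (ae_of_all _ fun ω => ?_)
        show (f ω ^ p) ^ r = f ω ^ q
        rw [← Real.rpow_mul (hf ω), hpr]

end helper

theorem stmt6 {Ω : Type*} [MeasurableSpace Ω] (μ : Measure Ω) [IsProbabilityMeasure μ]
    (ψ : ℝ → ℝ) (hψpos : ∀ u : ℝ, 1 ≤ u → 0 < ψ u)
    (hψmono : StrictMonoOn ψ (Set.Ici 1)) (hψcont : ContinuousOn ψ (Set.Ici 1))
    (hψtop : Tendsto ψ atTop atTop)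
    (n : ℕ) (hn : 0 < n) (ξ : Fin n → Ω → ℝ) (hmem : ∀ i, MemF μ ψ (ξ i)) :
    Fnorm μ ψ (fun ω => ⨆ i, |ξ i ω|) ≤
      (⨆ u : {u : ℝ // 1 ≤ u}, ⨅ v : {v : ℝ // 0 < v},
          (n : ℝ) ^ (1 / (u.1 + v.1)) * ψ (u.1 + v.1) / ψ u.1) *
        ⨆ i, Fnorm μ ψ (ξ i) := by
  haveI : Nonempty (Fin n) := Fin.pos_iff_nonempty.mp hn
  haveI : Nonempty {u : ℝ // 1 ≤ u} := ⟨⟨1, le_rfl⟩⟩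
  haveI : Nonempty {v : ℝ // 0 < v} := ⟨⟨1, one_pos⟩⟩
  have hn1 : (1:ℝ) ≤ (n:ℝ) := by exact_mod_cast hn
  set g : Ω → ℝ := fun ω => ⨆ i, |ξ i ω| with hgdef
  set M : ℝ := ⨆ i, Fnorm μ ψ (ξ i) with hMdef
  set f : {u : ℝ // 1 ≤ u} → {v : ℝ // 0 < v} → ℝ := fun u v =>
    (n : ℝ) ^ (1 / (u.1 + v.1)) * ψ (u.1 + v.1) / ψ u.1 with hfdef
  -- pointwise facts about g
  have hg0 : ∀ ω, 0 ≤ g ω := fun ω =>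
    le_trans (abs_nonneg (ξ ⟨0, hn⟩ ω))
      (le_ciSup (f := fun i => |ξ i ω|) (Set.Finite.bddAbove (Set.finite_range _)) ⟨0, hn⟩)
  have hgj : ∀ ω, ∃ j : Fin n, g ω = |ξ j ω| := by
    intro ω
    obtain ⟨j, _, hj⟩ := Finset.exists_mem_eq_sup' (Finset.univ_nonempty (α := Fin n))
      (fun i => |ξ i ω|)
    refine ⟨j, ?_⟩
    show (⨆ i, |ξ i ω|) = |ξ j ω|
    rw [← Finset.sup'_univ_eq_ciSup, hj]
  -- measurability of g
  have habs : ∀ i, AEStronglyMeasurable (fun ω => |ξ i ω|) μ := by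
    intro i
    have := ((hmem i).1 1 le_rfl).aestronglyMeasurable
    simpa [Real.rpow_one] using this
  have hmeasg : AEStronglyMeasurable g μ := by
    refine ⟨Finset.univ.sup' Finset.univ_nonempty (fun i => (habs i).mk _), ?_, ?_⟩
    · exact (Finset.measurable_sup' Finset.univ_nonempty
        fun i _ => ((habs i).stronglyMeasurable_mk).measurable).stronglyMeasurable
    · have hall : ∀ᵐ ω ∂μ, ∀ i, |ξ i ω| = (habs i).mk _ ω :=
        ae_all_iff.2 fun i => (habs i).ae_eq_mk
      filter_upwards [hall] with ω hω
      show (⨆ i, |ξ i ω|) = _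
      rw [← Finset.sup'_univ_eq_ciSup, Finset.sup'_apply]
      exact Finset.sup'_congr _ rfl fun i _ => hω i
  -- integrability of powers of g
  have hgint : ∀ w : ℝ, 1 ≤ w → Integrable (fun ω => g ω ^ w) μ := by
    intro w hw
    refine Integrable.mono'
      (integrable_finset_sum Finset.univ fun i _ => (hmem i).1 w hw)
      ((Real.continuous_rpow_const (by linarith : (0:ℝ) ≤ w)).comp_aestronglyMeasurable hmeasg)
      (ae_of_all _ fun ω => ?_)
    rw [Real.norm_of_nonneg (Real.rpow_nonneg (hg0 ω) w)]
    obtain ⟨j, hj⟩ := hgj ω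
    rw [hj]
    exact Finset.single_le_sum (f := fun i => |ξ i ω| ^ w)
      (fun i _ => Real.rpow_nonneg (abs_nonneg _) w) (Finset.mem_univ j)
  -- M is nonnegative
  have hM0 : 0 ≤ M := by
    have h1 : (0:ℝ) ≤ (∫ ω, |ξ ⟨0,hn⟩ ω| ^ (1:ℝ) ∂μ) ^ (1/(1:ℝ)) / ψ 1 :=
      div_nonneg (Real.rpow_nonneg (integral_nonneg fun ω =>
        Real.rpow_nonneg (abs_nonneg _) 1) _) (hψpos 1 le_rfl).le
    refine le_trans (le_trans h1 ?_) (le_ciSup (Set.Finite.bddAbove (Set.finite_range _)) ⟨0,hn⟩)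
    exact le_ciSup (hmem ⟨0,hn⟩).2 (⟨1, le_rfl⟩ : {u : ℝ // 1 ≤ u})
  -- main moment bound
  have hsum : ∀ w : ℝ, 1 ≤ w → ∫ ω, g ω ^ w ∂μ ≤ (n : ℝ) * (ψ w * M) ^ w := by
    intro w hw
    have hψw := hψpos w hw
    have step1 : ∫ ω, g ω ^ w ∂μ ≤ ∑ i : Fin n, ∫ ω, |ξ i ω| ^ w ∂μ := by
      rw [← integral_finset_sum Finset.univ fun i _ => (hmem i).1 w hw]
      refine integral_mono (hgint w hw)
        (integrable_finset_sum Finset.univ fun i _ => (hmem i).1 w hw) (fun ω => ?_)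
      obtain ⟨j, hj⟩ := hgj ω
      rw [hj]
      exact Finset.single_le_sum (f := fun i => |ξ i ω| ^ w)
        (fun i _ => Real.rpow_nonneg (abs_nonneg _) w) (Finset.mem_univ j)
    have step2 : ∀ i, ∫ ω, |ξ i ω| ^ w ∂μ ≤ (ψ w * M) ^ w := by
      intro i
      have hFi : Fnorm μ ψ (ξ i) ≤ M :=
        le_ciSup (f := fun i => Fnorm μ ψ (ξ i)) (Set.Finite.bddAbove (Set.finite_range _)) i
      have h1 : (∫ ω, |ξ i ω| ^ w ∂μ) ^ (1/w) / ψ w ≤ M :=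
        le_trans (le_ciSup (hmem i).2 (⟨w, hw⟩ : {u : ℝ // 1 ≤ u})) hFi
      have h2 : (∫ ω, |ξ i ω| ^ w ∂μ) ^ (1/w) ≤ ψ w * M := by
        rw [div_le_iff₀ hψw] at h1; linarith [h1]
      have hint0 : (0:ℝ) ≤ ∫ ω, |ξ i ω| ^ w ∂μ :=
        integral_nonneg fun ω => Real.rpow_nonneg (abs_nonneg _) w
      calc ∫ ω, |ξ i ω| ^ w ∂μ = ((∫ ω, |ξ i ω| ^ w ∂μ) ^ (1/w)) ^ w := by
            rw [one_div, Real.rpow_inv_rpow hint0 (by linarith)]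
        _ ≤ (ψ w * M) ^ w := Real.rpow_le_rpow (Real.rpow_nonneg hint0 _) h2 (by linarith)
    calc ∫ ω, g ω ^ w ∂μ ≤ ∑ i : Fin n, ∫ ω, |ξ i ω| ^ w ∂μ := step1
      _ ≤ ∑ _i : Fin n, (ψ w * M) ^ w := Finset.sum_le_sum fun i _ => step2 i
      _ = (n : ℝ) * (ψ w * M) ^ w := by
          rw [Finset.sum_const, Finset.card_univ, Fintype.card_fin, nsmul_eq_mul]
  -- the key estimate for fixed u and v
  have key : ∀ (u : {u : ℝ // 1 ≤ u}) (v : {v : ℝ // 0 < v}),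
      (∫ ω, g ω ^ u.1 ∂μ) ^ (1/u.1) / ψ u.1 ≤ f u v * M := by
    rintro ⟨u, hu⟩ ⟨v, hv⟩
    set w := u + v with hwdef
    have hw : 1 ≤ w := by rw [hwdef]; linarith
    have hψw := hψpos w hw
    have c1 : (∫ ω, g ω ^ u ∂μ) ^ (1/u) ≤ (∫ ω, g ω ^ w ∂μ) ^ (1/w) :=
      lyapunov μ g hg0 u w (by linarith) (by rw [hwdef]; linarith) (hgint u hu) (hgint w hw)
    have c2 : (∫ ω, g ω ^ w ∂μ) ^ (1/w) ≤ ((n:ℝ) * (ψ w * M) ^ w) ^ (1/w) :=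
      Real.rpow_le_rpow (integral_nonneg fun ω => Real.rpow_nonneg (hg0 ω) w)
        (hsum w hw) (by positivity)
    have c3 : ((n:ℝ) * (ψ w * M) ^ w) ^ (1/w) = (n:ℝ) ^ (1/w) * (ψ w * M) := by
      rw [Real.mul_rpow (by positivity) (Real.rpow_nonneg (by positivity) w),
        one_div, Real.rpow_rpow_inv (by positivity) (by positivity)]
    have c4 : (∫ ω, g ω ^ u ∂μ) ^ (1/u) ≤ (n:ℝ) ^ (1/w) * (ψ w * M) :=
      le_trans c1 (c3 ▸ c2)
    have hψu := hψpos u hu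
    rw [div_le_iff₀ hψu]
    calc (∫ ω, g ω ^ u ∂μ) ^ (1/u) ≤ (n:ℝ) ^ (1/w) * (ψ w * M) := c4
      _ = (n:ℝ) ^ (1/(u+v)) * ψ (u+v) / ψ u * M * ψ u := by
          rw [← hwdef]; field_simp
  -- the infima are bounded above by n
  have hbdd_inf : ∀ u : {u : ℝ // 1 ≤ u}, (⨅ v : {v : ℝ // 0 < v}, f u v) ≤ (n:ℝ) := by
    rintro ⟨u, hu⟩
    have hu0 : (0:ℝ) < u := by linarith
    have hψu := hψpos u hu
    have hbb : BddBelow (Set.range fun v : {v : ℝ // 0 < v} => f ⟨u, hu⟩ v) := by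
      refine ⟨0, ?_⟩
      rintro x ⟨⟨v, hv⟩, rfl⟩
      have : (1:ℝ) ≤ u + v := by linarith
      have := hψpos (u+v) this
      positivity
    -- limit as v → 0⁺
    have T1 : Tendsto (fun v : ℝ => u + v) (nhdsWithin 0 (Set.Ioi 0)) (nhdsWithin u (Set.Ici 1)) := by
      rw [tendsto_nhdsWithin_iff]
      constructor
      · have : Tendsto (fun v : ℝ => u + v) (nhds 0) (nhds (u + 0)) :=
          tendsto_const_nhds.add tendsto_id
        simpa using this.mono_left nhdsWithin_le_nhds
      · filter_upwards [self_mem_nhdsWithin] with v hv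
        have : (0:ℝ) < v := hv
        exact Set.mem_Ici.2 (by linarith)
    have T2 : Tendsto (fun v : ℝ => ψ (u + v)) (nhdsWithin 0 (Set.Ioi 0)) (nhds (ψ u)) :=
      (hψcont u hu).tendsto.comp T1
    have T3 : Tendsto (fun v : ℝ => (n:ℝ) ^ (1/(u+v))) (nhdsWithin 0 (Set.Ioi 0))
        (nhds ((n:ℝ) ^ (1/u))) := by
      have hCA : ContinuousAt (fun w : ℝ => (n:ℝ) ^ (1/w)) u := by
        refine ContinuousAt.rpow continuousAt_const ?_ (Or.inl (by positivity))
        exact continuousAt_const.div continuousAt_id (ne_of_gt hu0)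
      have : Tendsto (fun v : ℝ => u + v) (nhdsWithin 0 (Set.Ioi 0)) (nhds u) :=
        T1.mono_right nhdsWithin_le_nhds
      exact hCA.tendsto.comp this
    have T : Tendsto (fun v : ℝ => (n:ℝ) ^ (1/(u+v)) * ψ (u+v) / ψ u)
        (nhdsWithin 0 (Set.Ioi 0)) (nhds ((n:ℝ) ^ (1/u))) := by
      have := (T3.mul T2).div_const (ψ u)
      rwa [mul_div_assoc, div_self (ne_of_gt hψu), mul_one] at this
    have hnu : (n:ℝ) ^ (1/u) ≤ (n:ℝ) := by
      calc (n:ℝ) ^ (1/u) ≤ (n:ℝ) ^ (1:ℝ) :=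
            Real.rpow_le_rpow_of_exponent_le hn1 (by rw [div_le_one hu0]; linarith)
        _ = (n:ℝ) := Real.rpow_one _
    refine le_of_forall_pos_le_add fun ε hε => ?_
    have hev : ∀ᶠ v in nhdsWithin (0:ℝ) (Set.Ioi 0),
        (n:ℝ) ^ (1/(u+v)) * ψ (u+v) / ψ u < (n:ℝ) ^ (1/u) + ε :=
      T.eventually (gt_mem_nhds (lt_add_of_pos_right _ hε))
    obtain ⟨v, hvlt, hvpos⟩ := (hev.and self_mem_nhdsWithin).exists
    have hvpos' : (0:ℝ) < v := hvpos
    refine le_trans (ciInf_le hbb (⟨v, hvpos'⟩ : {v : ℝ // 0 < v})) ?_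
    calc f ⟨u, hu⟩ ⟨v, hvpos'⟩ ≤ (n:ℝ) ^ (1/u) + ε := le_of_lt hvlt
      _ ≤ (n:ℝ) + ε := by linarith
  -- assemble
  have hbddc : BddAbove (Set.range fun u : {u : ℝ // 1 ≤ u} =>
      ⨅ v : {v : ℝ // 0 < v}, f u v) := by
    refine ⟨(n:ℝ), ?_⟩
    rintro x ⟨u, rfl⟩
    exact hbdd_inf u
  rw [Fnorm]
  refine ciSup_le fun u => ?_
  have habsint : (∫ ω, |g ω| ^ u.1 ∂μ) = ∫ ω, g ω ^ u.1 ∂μ :=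
    integral_congr_ae (ae_of_all _ fun ω => by
      show |g ω| ^ u.1 = g ω ^ u.1
      rw [abs_of_nonneg (hg0 ω)])
  have hstep1 : (∫ ω, g ω ^ u.1 ∂μ) ^ (1/u.1) / ψ u.1 ≤
      (⨅ v : {v : ℝ // 0 < v}, f u v) * M := by
    by_cases hM : M = 0
    · have := key u ⟨1, one_pos⟩
      rw [hM, mul_zero] at this ⊢
      exact this
    · have hMpos : 0 < M := lt_of_le_of_ne hM0 (Ne.symm hM)
      rw [← div_le_iff₀ hMpos]
      exact le_ciInf fun v => (div_le_iff₀ hMpos).2 (key u v)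
  have hstep2 : (⨅ v : {v : ℝ // 0 < v}, f u v) ≤
      ⨆ u : {u : ℝ // 1 ≤ u}, ⨅ v : {v : ℝ // 0 < v}, f u v :=
    le_ciSup hbddc u
  calc (∫ ω, |g ω| ^ u.1 ∂μ) ^ (1/u.1) / ψ u.1
      = (∫ ω, g ω ^ u.1 ∂μ) ^ (1/u.1) / ψ u.1 := by rw [habsint]
    _ ≤ (⨅ v : {v : ℝ // 0 < v}, f u v) * M := hstep1
    _ ≤ (⨆ u : {u : ℝ // 1 ≤ u}, ⨅ v : {v : ℝ // 0 < v}, f u v) * M :=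
        mul_le_mul_of_nonneg_right hstep2 hM0
end

section
/- For ψ(u) = (ln(u+1))^λ with λ > 0, the sequence κ(n) = e · (ln(ln n + 2)/ln 2)^λ for n > 1 (and κ(1)=1) is a majorizing characteristic of F_ψ(Ω): ‖max_{1≤i≤n}|ξ_i|‖_ψ ≤ e (ln(ln n + 2)/ln 2)^λ max_{1≤i≤n}‖ξ_i‖_ψ. -/
open MeasureTheory Real Filter
open scoped ENNReal NNReal


lemma logineq {a w : ℝ} (ha : 2 ≤ a) (hw : 0 ≤ w) :
    Real.log 2 * Real.log (a + w) ≤ Real.log a * Real.log (2 + w) := by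
  have ha0 : (0:ℝ) < a := by linarith
  have hla : Real.log 2 ≤ Real.log a := Real.log_le_log (by norm_num) ha
  have hl2 : 0 ≤ Real.log 2 := Real.log_nonneg one_le_two
  have hq : 0 ≤ Real.log ((2 + w)/2) := Real.log_nonneg (by linarith)
  have key : Real.log (a + w) ≤ Real.log a + Real.log ((2+w)/2) := by
    rw [← Real.log_mul (ne_of_gt ha0) (by positivity)]
    apply Real.log_le_log (by linarith)
    nlinarith
  have hsplit : Real.log (2 + w) = Real.log 2 + Real.log ((2+w)/2) := by
    rw [← Real.log_mul two_ne_zero (by positivity), show (2:ℝ) * ((2+w)/2) = 2 + w by ring]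
  calc Real.log 2 * Real.log (a+w) ≤ Real.log 2 * (Real.log a + Real.log ((2+w)/2)) :=
        mul_le_mul_of_nonneg_left key hl2
    _ ≤ Real.log a * (Real.log 2 + Real.log ((2+w)/2)) := by nlinarith
    _ = Real.log a * Real.log (2+w) := by rw [hsplit]

lemma lyapunov_s8 {Ω : Type*} [MeasurableSpace Ω] (μ : Measure Ω) [IsProbabilityMeasure μ]
    {f : Ω → ℝ} (hf : ∀ ω, 0 ≤ f ω) (hm : AEStronglyMeasurable f μ)
    {u s : ℝ} (hu : 0 < u) (hus : u ≤ s)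
    (hiu : Integrable (fun ω => f ω ^ u) μ) (his : Integrable (fun ω => f ω ^ s) μ) :
    (∫ ω, f ω ^ u ∂μ) ^ (1/u) ≤ (∫ ω, f ω ^ s ∂μ) ^ (1/s) := by
  have hs : 0 < s := lt_of_lt_of_le hu hus
  have key := eLpNorm'_le_eLpNorm'_of_exponent_le hu hus μ hm
  have conv : ∀ v : ℝ, 0 < v → Integrable (fun ω => f ω ^ v) μ →
      eLpNorm' f v μ = ENNReal.ofReal ((∫ ω, f ω ^ v ∂μ) ^ (1/v)) := by
    intro v hv hi
    unfold eLpNorm'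
    have h1 : ∀ ω, (‖f ω‖ₑ) ^ v = ENNReal.ofReal (f ω ^ v) := by
      intro ω
      rw [Real.enorm_eq_ofReal (hf ω), ENNReal.ofReal_rpow_of_nonneg (hf ω) hv.le]
    simp_rw [h1]
    rw [← ofReal_integral_eq_lintegral_ofReal hi
        (Filter.Eventually.of_forall fun ω => Real.rpow_nonneg (hf ω) v),
      ENNReal.ofReal_rpow_of_nonneg (integral_nonneg fun ω => Real.rpow_nonneg (hf ω) v)
        (one_div_nonneg.mpr hv.le)]
  rw [conv u hu hiu, conv s hs his] at key
  exact (ENNReal.ofReal_le_ofReal_iff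
    (Real.rpow_nonneg (integral_nonneg fun ω => Real.rpow_nonneg (hf ω) s) _)).mp key

theorem stmt8 {Ω : Type*} [MeasurableSpace Ω] (μ : Measure Ω) [IsProbabilityMeasure μ]
    (lam : ℝ) (hlam : 0 < lam)
    (n : ℕ) (hn : 1 < n) (ξ : Fin n → Ω → ℝ)
    (hmem : ∀ i, MemF μ (fun u => Real.log (u + 1) ^ lam) (ξ i)) :
    Fnorm μ (fun u => Real.log (u + 1) ^ lam) (fun ω => ⨆ i, |ξ i ω|) ≤
      Real.exp 1 * (Real.log (Real.log n + 2) / Real.log 2) ^ lam *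
        ⨆ i, Fnorm μ (fun u => Real.log (u + 1) ^ lam) (ξ i) := by
  haveI : Nonempty (Fin n) := ⟨⟨0, by omega⟩⟩
  haveI : Nonempty {u : ℝ // 1 ≤ u} := ⟨⟨1, le_rfl⟩⟩
  set ψ : ℝ → ℝ := fun u => Real.log (u + 1) ^ lam with hψdef
  have hn1 : (1:ℝ) < n := by exact_mod_cast hn
  have hw : 0 < Real.log n := Real.log_pos hn1
  set w := Real.log (n : ℝ) with hwdef
  set M := ⨆ i, Fnorm μ ψ (ξ i) with hMdef
  have ψpos : ∀ u : ℝ, 1 ≤ u → 0 < ψ u := fun u hu =>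
    Real.rpow_pos_of_pos (Real.log_pos (by linarith)) lam
  have term_nonneg : ∀ (ζ : Ω → ℝ) (u : {u : ℝ // 1 ≤ u}),
      0 ≤ (∫ ω, |ζ ω| ^ u.1 ∂μ) ^ (1 / u.1) / ψ u.1 := fun ζ u =>
    div_nonneg (Real.rpow_nonneg
      (integral_nonneg fun ω => Real.rpow_nonneg (abs_nonneg _) _) _) (ψpos u.1 u.2).le
  have FnM : ∀ i, Fnorm μ ψ (ξ i) ≤ M := fun i =>
    le_ciSup (f := fun i => Fnorm μ ψ (ξ i)) (Set.finite_range _).bddAbove i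
  have hM0 : 0 ≤ M :=
    le_trans (le_trans (term_nonneg (ξ (Classical.arbitrary _)) ⟨1, le_rfl⟩)
      (le_ciSup (hmem _).2 ⟨1, le_rfl⟩)) (FnM _)
  have moment : ∀ (i : Fin n) (v : ℝ), 1 ≤ v →
      (∫ ω, |ξ i ω| ^ v ∂μ) ^ (1/v) ≤ ψ v * M := by
    intro i v hv
    have h : (∫ ω, |ξ i ω| ^ v ∂μ) ^ (1/v) / ψ v ≤ M :=
      le_trans (le_ciSup (hmem i).2 ⟨v, hv⟩) (FnM i)
    rw [div_le_iff₀ (ψpos v hv)] at h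
    linarith [h]
  have hξm : ∀ i, AEStronglyMeasurable (fun ω => |ξ i ω|) μ := by
    intro i
    have h := ((hmem i).1 1 le_rfl).aestronglyMeasurable
    simpa [Real.rpow_one] using h
  set g : Ω → ℝ := fun ω => ⨆ i, |ξ i ω| with hgdef
  have hg0 : ∀ ω, 0 ≤ g ω := fun ω => Real.iSup_nonneg fun i => abs_nonneg _
  have hgm : AEStronglyMeasurable g μ := by
    have h : AEMeasurable (Finset.univ.sup' Finset.univ_nonempty
        (fun i (ω : Ω) => |ξ i ω|)) μ :=
      Finset.sup'_induction (p := fun F : Ω → ℝ => AEMeasurable F μ) _ _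
        (fun p hp q hq => hp.sup' hq) (fun i _ => (hξm i).aemeasurable)
    have he : (Finset.univ.sup' Finset.univ_nonempty (fun i (ω : Ω) => |ξ i ω|)) = g := by
      funext ω
      rw [hgdef]
      rw [Finset.sup'_apply, Finset.sup'_univ_eq_ciSup]
    rw [he] at h
    exact h.aestronglyMeasurable
  have gpow_le : ∀ (v : ℝ), 0 ≤ v → ∀ ω, g ω ^ v ≤ ∑ i, |ξ i ω| ^ v := by
    intro v hv ω
    obtain ⟨j, hj⟩ := exists_eq_ciSup_of_finite (f := fun i => |ξ i ω|)
    have : g ω = |ξ j ω| := by rw [hgdef]; exact hj.symm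
    rw [this]
    exact Finset.single_le_sum (f := fun i => |ξ i ω| ^ v)
      (fun i _ => Real.rpow_nonneg (abs_nonneg _) v) (Finset.mem_univ j)
  have intg : ∀ (v : ℝ), 1 ≤ v → Integrable (fun ω => g ω ^ v) μ := by
    intro v hv
    refine (integrable_finset_sum Finset.univ fun i _ => (hmem i).1 v hv).mono'
      ((Real.continuous_rpow_const (by linarith : (0:ℝ) ≤ v)).comp_aestronglyMeasurable hgm)
      (Filter.Eventually.of_forall fun ω => ?_)
    rw [Real.norm_eq_abs, abs_of_nonneg (Real.rpow_nonneg (hg0 ω) v)]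
    exact gpow_le v (by linarith) ω
  refine ciSup_le fun up => ?_
  obtain ⟨u, hu⟩ := up
  have hu0 : 0 < u := lt_of_lt_of_le one_pos hu
  set s := u + w with hsdef
  have hs1 : 1 ≤ s := by rw [hsdef]; linarith
  have hs0 : 0 < s := by linarith
  have hus : u ≤ s := by rw [hsdef]; linarith
  have h1 : (∫ ω, g ω ^ u ∂μ) ^ (1/u) ≤ (∫ ω, g ω ^ s ∂μ) ^ (1/s) :=
    lyapunov_s8 μ hg0 hgm hu0 hus (intg u hu) (intg s hs1)
  have h2 : ∫ ω, g ω ^ s ∂μ ≤ ∑ i, ∫ ω, |ξ i ω| ^ s ∂μ := by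
    rw [← integral_finset_sum Finset.univ fun i _ => (hmem i).1 s hs1]
    exact integral_mono (intg s hs1)
      (integrable_finset_sum Finset.univ fun i _ => (hmem i).1 s hs1)
      (gpow_le s (by linarith))
  have h3 : ∑ i, ∫ ω, |ξ i ω| ^ s ∂μ ≤ (n : ℝ) * (ψ s * M) ^ s := by
    have hb : ∀ i : Fin n, ∫ ω, |ξ i ω| ^ s ∂μ ≤ (ψ s * M) ^ s := by
      intro i
      have ha0 : 0 ≤ ∫ ω, |ξ i ω| ^ s ∂μ :=
        integral_nonneg fun ω => Real.rpow_nonneg (abs_nonneg _) _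
      have := Real.rpow_le_rpow (Real.rpow_nonneg ha0 _) (moment i s hs1) hs0.le
      rwa [← Real.rpow_mul ha0, one_div, inv_mul_cancel₀ hs0.ne', Real.rpow_one] at this
    calc ∑ i, ∫ ω, |ξ i ω| ^ s ∂μ ≤ ∑ _i : Fin n, (ψ s * M) ^ s :=
          Finset.sum_le_sum fun i _ => hb i
      _ = (n : ℝ) * (ψ s * M) ^ s := by
          rw [Finset.sum_const, Finset.card_univ, Fintype.card_fin, nsmul_eq_mul]
  have hψsM : 0 ≤ ψ s * M := mul_nonneg (ψpos s hs1).le hM0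
  have h4 : (∫ ω, g ω ^ s ∂μ) ^ (1/s) ≤ (n : ℝ) ^ (1/s) * (ψ s * M) := by
    have := Real.rpow_le_rpow
      (integral_nonneg fun ω => Real.rpow_nonneg (hg0 ω) _) (h2.trans h3)
      (one_div_nonneg.mpr hs0.le)
    rwa [Real.mul_rpow (by positivity) (Real.rpow_nonneg hψsM _),
      ← Real.rpow_mul hψsM, mul_one_div, div_self hs0.ne', Real.rpow_one] at this
  have h5 : (n : ℝ) ^ (1/s) ≤ Real.exp 1 := by
    rw [Real.rpow_def_of_pos (by linarith : (0:ℝ) < n), ← hwdef]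
    exact Real.exp_le_exp.mpr (by
      rw [mul_one_div, div_le_one hs0]
      linarith)
  have h6 : ψ s ≤ (Real.log (w + 2) / Real.log 2) ^ lam * ψ u := by
    have hl2 : 0 < Real.log 2 := Real.log_pos one_lt_two
    have hlu : 0 ≤ Real.log (u + 1) := Real.log_nonneg (by linarith)
    have key : Real.log (s + 1) ≤ Real.log (w + 2) / Real.log 2 * Real.log (u + 1) := by
      have := logineq (a := u + 1) (w := w) (by linarith) hw.le
      rw [div_mul_eq_mul_div, le_div_iff₀ hl2]
      have harg : s + 1 = (u + 1) + w := by rw [hsdef]; ring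
      have harg2 : w + 2 = 2 + w := by ring
      rw [harg, harg2]
      nlinarith [this]
    rw [hψdef]
    simp only
    rw [← Real.mul_rpow (div_nonneg (Real.log_nonneg (by linarith)) hl2.le) hlu]
    exact Real.rpow_le_rpow (Real.log_nonneg (by linarith)) key hlam.le
  have chain : (∫ ω, g ω ^ u ∂μ) ^ (1/u) ≤
      Real.exp 1 * ((Real.log (w + 2) / Real.log 2) ^ lam * ψ u * M) := by
    have c1 : (n : ℝ) ^ (1/s) * (ψ s * M) ≤ Real.exp 1 * (ψ s * M) :=
      mul_le_mul_of_nonneg_right h5 hψsM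
    have c2 : ψ s * M ≤ (Real.log (w + 2) / Real.log 2) ^ lam * ψ u * M :=
      mul_le_mul_of_nonneg_right h6 hM0
    calc (∫ ω, g ω ^ u ∂μ) ^ (1/u) ≤ (∫ ω, g ω ^ s ∂μ) ^ (1/s) := h1
      _ ≤ (n : ℝ) ^ (1/s) * (ψ s * M) := h4
      _ ≤ Real.exp 1 * (ψ s * M) := c1
      _ ≤ Real.exp 1 * ((Real.log (w + 2) / Real.log 2) ^ lam * ψ u * M) :=
          mul_le_mul_of_nonneg_left c2 (Real.exp_pos 1).le
  have hint : (∫ ω, |g ω| ^ u ∂μ) = ∫ ω, g ω ^ u ∂μ := by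
    congr 1
    funext ω
    rw [abs_of_nonneg (hg0 ω)]
  show (∫ ω, |g ω| ^ u ∂μ) ^ (1/u) / ψ u ≤ _
  rw [hint, div_le_iff₀ (ψpos u hu)]
  calc (∫ ω, g ω ^ u ∂μ) ^ (1/u) ≤
      Real.exp 1 * ((Real.log (w + 2) / Real.log 2) ^ lam * ψ u * M) := chain
    _ = Real.exp 1 * (Real.log (w + 2) / Real.log 2) ^ lam * M * ψ u := by ring
end

section
/- For all integers k ≥ 2 and 1 ≤ l ≤ k−1, the binomial coefficients satisfy C(2k, 2l) ≤ C(k, l) · k^k / (l^l (k−l)^{k−l}). -/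
open Real Filter

lemma fact_lb (n : ℕ) : Real.sqrt π * (Real.sqrt (2*n) * ((n : ℝ)/Real.exp 1)^n) ≤ (Nat.factorial n : ℝ) := by
  cases n with
  | zero => simp [Real.sqrt_nonneg]
  | succ n =>
    have h1 : Real.sqrt π ≤ Stirling.stirlingSeq (n+1) :=
      Stirling.stirlingSeq'_antitone.le_of_tendsto
        ((Filter.tendsto_add_atTop_iff_nat 1).mpr Stirling.tendsto_stirlingSeq_sqrt_pi) n
    have hpos : (0:ℝ) < Real.sqrt (2*(n+1:ℕ)) * (((n+1:ℕ) : ℝ)/Real.exp 1)^(n+1) := by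
      positivity
    have := mul_le_mul_of_nonneg_right h1 hpos.le
    rwa [Stirling.stirlingSeq, div_mul_cancel₀] at this
    · exact hpos.ne'

lemma fact_ub (n : ℕ) (hn : 1 ≤ n) :
    (Nat.factorial n : ℝ) ≤ (Real.exp 1 / Real.sqrt 2) * (Real.sqrt (2*n) * ((n : ℝ)/Real.exp 1)^n) := by
  obtain ⟨m, rfl⟩ := Nat.exists_eq_add_of_le hn
  have h1 : Stirling.stirlingSeq (1 + m) ≤ Real.exp 1 / Real.sqrt 2 := by
    have := Stirling.stirlingSeq'_antitone (Nat.zero_le m)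
    simpa [Nat.add_comm] using this
  have hpos : (0:ℝ) < Real.sqrt (2*(1+m:ℕ)) * (((1+m:ℕ) : ℝ)/Real.exp 1)^(1+m) := by
    positivity
  have := mul_le_mul_of_nonneg_right h1 hpos.le
  rwa [Stirling.stirlingSeq, div_mul_cancel₀] at this
  · exact hpos.ne'

lemma middle (l m : ℕ) (x y : ℝ) (hx : 0 < x) (hy : 0 < y) :
    (Real.exp 1/Real.sqrt 2 * (Real.sqrt (2*(2*(x+y))) * ((2*(x+y))/Real.exp 1)^(2*(l+m)))) * (x^l * y^m) *
      ((Real.exp 1/Real.sqrt 2 * (Real.sqrt (2*x) * (x/Real.exp 1)^l)) * (Real.exp 1/Real.sqrt 2 * (Real.sqrt (2*y) * (y/Real.exp 1)^m)))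
    ≤ (Real.sqrt π * (Real.sqrt (2*(x+y)) * ((x+y)/Real.exp 1)^(l+m))) * (x+y)^(l+m) *
      ((Real.sqrt π * (Real.sqrt (2*(2*x)) * ((2*x)/Real.exp 1)^(2*l))) * (Real.sqrt π * (Real.sqrt (2*(2*y)) * ((2*y)/Real.exp 1)^(2*m)))) := by
  have he : Real.exp 1 ≠ 0 := (Real.exp_pos 1).ne'
  have hsqrt : Real.sqrt (2*(x+y)) * Real.sqrt (2*(2*x)) * Real.sqrt (2*(2*y))
      = Real.sqrt 2 * (Real.sqrt (2*(2*(x+y))) * (Real.sqrt (2*x) * Real.sqrt (2*y))) := by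
    rw [← Real.sqrt_mul (by nlinarith [hx.le, hy.le]), ← Real.sqrt_mul (by nlinarith [hx.le, hy.le]),
        ← Real.sqrt_mul (by nlinarith [hx.le, hy.le]), ← Real.sqrt_mul (by nlinarith [hx.le, hy.le]),
        ← Real.sqrt_mul (by nlinarith [hx.le, hy.le])]
    congr 1; ring
  have hpow : ((x+y)/Real.exp 1)^(l+m) * ((2*x)/Real.exp 1)^(2*l) * ((2*y)/Real.exp 1)^(2*m) * (x+y)^(l+m)
      = ((2*(x+y))/Real.exp 1)^(2*(l+m)) * ((x/Real.exp 1)^l * ((y/Real.exp 1)^m * (x^l * y^m))) := by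
    simp only [div_eq_mul_inv, mul_pow]
    ring
  have hconst : (Real.exp 1 / Real.sqrt 2)^3 ≤ Real.sqrt 2 * Real.sqrt π ^ 3 := by
    have h2 : (Real.sqrt 2:ℝ)^2 = 2 := Real.sq_sqrt (by norm_num)
    have hsl : (1.772:ℝ) ≤ Real.sqrt π := by
      rw [show (1.772:ℝ) = Real.sqrt (1.772^2) from (Real.sqrt_sq (by norm_num)).symm]
      exact Real.sqrt_le_sqrt (by nlinarith [Real.pi_gt_d6])
    have h1 : Real.exp 1 ^ 3 ≤ 2.7182818286^3 := pow_le_pow_left₀ (Real.exp_pos 1).le Real.exp_one_lt_d9.le 3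
    have h2' : (1.772:ℝ)^3 ≤ Real.sqrt π ^3 := pow_le_pow_left₀ (by norm_num) hsl 3
    rw [div_pow, div_le_iff₀ (by positivity)]
    have h4 : Real.sqrt 2 ^ 3 * Real.sqrt 2 = 4 := by
      rw [← pow_succ, show (3+1) = 2*2 from rfl, pow_mul, h2]; norm_num
    nlinarith [h1, h2']
  set S : ℝ := (Real.sqrt (2*(2*(x+y))) * (Real.sqrt (2*x) * Real.sqrt (2*y))) *
      (((2*(x+y))/Real.exp 1)^(2*(l+m)) * ((x/Real.exp 1)^l * ((y/Real.exp 1)^m * (x^l * y^m)))) with hS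
  calc (Real.exp 1/Real.sqrt 2 * (Real.sqrt (2*(2*(x+y))) * ((2*(x+y))/Real.exp 1)^(2*(l+m)))) * (x^l * y^m) *
      ((Real.exp 1/Real.sqrt 2 * (Real.sqrt (2*x) * (x/Real.exp 1)^l)) * (Real.exp 1/Real.sqrt 2 * (Real.sqrt (2*y) * (y/Real.exp 1)^m)))
      = (Real.exp 1/Real.sqrt 2)^3 * S := by rw [hS]; ring
    _ ≤ (Real.sqrt 2 * Real.sqrt π ^3) * S := by
        refine mul_le_mul_of_nonneg_right hconst ?_
        rw [hS]; positivity
    _ = Real.sqrt π ^3 * (Real.sqrt 2 * (Real.sqrt (2*(2*(x+y))) * (Real.sqrt (2*x) * Real.sqrt (2*y)))) *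
        (((2*(x+y))/Real.exp 1)^(2*(l+m)) * ((x/Real.exp 1)^l * ((y/Real.exp 1)^m * (x^l * y^m)))) := by
        rw [hS]; ring
    _ = Real.sqrt π ^3 * (Real.sqrt (2*(x+y)) * Real.sqrt (2*(2*x)) * Real.sqrt (2*(2*y))) *
        (((x+y)/Real.exp 1)^(l+m) * ((2*x)/Real.exp 1)^(2*l) * ((2*y)/Real.exp 1)^(2*m) * (x+y)^(l+m)) := by
        rw [hsqrt, hpow]
    _ = (Real.sqrt π * (Real.sqrt (2*(x+y)) * ((x+y)/Real.exp 1)^(l+m))) * (x+y)^(l+m) *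
      ((Real.sqrt π * (Real.sqrt (2*(2*x)) * ((2*x)/Real.exp 1)^(2*l))) * (Real.sqrt π * (Real.sqrt (2*(2*y)) * ((2*y)/Real.exp 1)^(2*m)))) := by
        ring

theorem stmt11 (k l : ℕ) (hk : 2 ≤ k) (hl : 1 ≤ l) (hlk : l ≤ k - 1) :
    (Nat.choose (2 * k) (2 * l) : ℝ) ≤
      (Nat.choose k l : ℝ) * (k : ℝ) ^ k / ((l : ℝ) ^ l * ((k : ℝ) - (l : ℝ)) ^ (k - l)) := by
  obtain ⟨m, rfl⟩ : ∃ m, k = l + m := ⟨k - l, by omega⟩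
  have hm1 : 1 ≤ m := by omega
  have hx : (0:ℝ) < l := by exact_mod_cast hl
  have hy : (0:ℝ) < m := by exact_mod_cast hm1
  have hcast : ((l + m : ℕ):ℝ) - (l:ℝ) = (m:ℝ) := by push_cast; ring
  rw [hcast, show l + m - l = m from by omega]
  rw [le_div_iff₀ (by positivity)]
  rw [Nat.cast_choose ℝ (show 2*l ≤ 2*(l+m) by omega),
      Nat.cast_choose ℝ (Nat.le_add_right l m),
      show 2*(l+m) - 2*l = 2*m from by omega,
      show l + m - l = m from by omega]
  rw [div_mul_eq_mul_div, div_mul_eq_mul_div,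
      div_le_div_iff₀ (by positivity) (by positivity)]
  have E := Real.exp 1
  calc ((2*(l+m)).factorial : ℝ) * ((l:ℝ)^l * (m:ℝ)^m) * ((l.factorial : ℝ) * (m.factorial : ℝ))
      ≤ (Real.exp 1/Real.sqrt 2 * (Real.sqrt (2*((2*(l+m) : ℕ):ℝ)) * (((2*(l+m) : ℕ):ℝ)/Real.exp 1)^(2*(l+m)))) * ((l:ℝ)^l * (m:ℝ)^m) *
        ((Real.exp 1/Real.sqrt 2 * (Real.sqrt (2*(l:ℝ)) * ((l:ℝ)/Real.exp 1)^l)) * (Real.exp 1/Real.sqrt 2 * (Real.sqrt (2*(m:ℝ)) * ((m:ℝ)/Real.exp 1)^m))) := by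
        gcongr ?_ * _ * (?_ * ?_)
        · exact fact_ub _ (by omega)
        · exact fact_ub _ (by omega)
        · exact fact_ub _ (by omega)
    _ ≤ (Real.sqrt π * (Real.sqrt (2*((l+m : ℕ):ℝ)) * (((l+m : ℕ):ℝ)/Real.exp 1)^(l+m))) * (((l+m : ℕ):ℝ))^(l+m) *
        ((Real.sqrt π * (Real.sqrt (2*((2*l : ℕ):ℝ)) * (((2*l : ℕ):ℝ)/Real.exp 1)^(2*l))) * (Real.sqrt π * (Real.sqrt (2*((2*m : ℕ):ℝ)) * (((2*m : ℕ):ℝ)/Real.exp 1)^(2*m)))) := by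
        push_cast
        exact middle l m _ _ hx hy
    _ ≤ ((l+m).factorial : ℝ) * (((l+m:ℕ)):ℝ)^(l+m) * (((2*l).factorial : ℝ) * ((2*m).factorial : ℝ)) := by
        gcongr ?_ * _ * (?_ * ?_)
        · exact fact_lb _
        · exact fact_lb _
        · exact fact_lb _
end

section
/- Let ν be a σ-finite measure on a measurable space T, p ≥ 1, and X = {X(t), t ∈ T} a measurable stochastic process with X(t) ∈ F_ψ(Ω) for each t and ∫_T ‖X(t)‖_ψ^p dν(t) < ∞. Then ∫_T |X(t)|^p dν(t) exists almost surely, and ‖ (∫_T |X(t)|^p dν(t))^{1/p} ‖_ψ ≤ (ψ(p)/ψ(1)) · (∫_T ‖X(t)‖_ψ^p dν(t))^{1/p}. -/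
open MeasureTheory Real Filter

open ENNReal

lemma mink_step {Ω T : Type*} [MeasurableSpace Ω] [MeasurableSpace T]
    (μ : Measure Ω) [IsFiniteMeasure μ] (ν : Measure T) [SigmaFinite ν]
    (g : T × Ω → ℝ≥0∞) (hg : Measurable g) (q : ℝ) (hq : 1 < q)
    (hfin : ∫⁻ ω, (∫⁻ t, g (t, ω) ∂ν) ^ q ∂μ ≠ ⊤) :
    (∫⁻ ω, (∫⁻ t, g (t, ω) ∂ν) ^ q ∂μ) ^ (1/q) ≤
      ∫⁻ t, (∫⁻ ω, g (t, ω) ^ q ∂μ) ^ (1/q) ∂ν := by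
  have hq0 : (0:ℝ) < q := by linarith
  set G : Ω → ℝ≥0∞ := fun ω => ∫⁻ t, g (t, ω) ∂ν with hG
  have hGm : Measurable G := hg.lintegral_prod_left'
  set A : ℝ≥0∞ := ∫⁻ ω, G ω ^ q ∂μ with hA
  set B : ℝ≥0∞ := ∫⁻ t, (∫⁻ ω, g (t, ω) ^ q ∂μ) ^ (1/q) ∂ν with hB
  rcases eq_or_ne A 0 with h0 | h0
  · rw [h0, ENNReal.zero_rpow_of_pos (by positivity)]
    exact zero_le
  set q' : ℝ := q / (q - 1) with hq'
  have hconj : q.HolderConjugate q' := (Real.holderConjugate_iff_eq_conjExponent hq).2 hq'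
  have hpoint : ∀ ω, G ω ^ q = G ω * G ω ^ (q - 1) := by
    intro ω
    rcases eq_or_ne (G ω) 0 with h | h
    · simp [h, ENNReal.zero_rpow_of_pos hq0,
        ENNReal.zero_rpow_of_pos (by linarith : (0:ℝ) < q - 1)]
    rcases eq_or_ne (G ω) ⊤ with h' | h'
    · simp [h', ENNReal.top_rpow_of_pos hq0,
        ENNReal.top_rpow_of_pos (by linarith : (0:ℝ) < q - 1)]
    · rw [show q = 1 + (q - 1) by ring, ENNReal.rpow_add _ _ h h', ENNReal.rpow_one]
      norm_num
  have e1 : A = ∫⁻ t, ∫⁻ ω, g (t, ω) * G ω ^ (q - 1) ∂μ ∂ν := by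
    rw [hA]
    have h2 : ∀ ω, G ω ^ q = ∫⁻ t, g (t, ω) * G ω ^ (q-1) ∂ν := by
      intro ω
      rw [hpoint ω]
      exact (lintegral_mul_const'' _
        ((hg.comp (measurable_prodMk_right)).aemeasurable)).symm
    simp_rw [h2]
    exact lintegral_lintegral_swap
      (((hg.comp measurable_swap).mul ((hGm.comp measurable_fst).pow_const _)).aemeasurable)
  have key : A ≤ B * A ^ (1/q') := by
    calc A = ∫⁻ t, ∫⁻ ω, g (t, ω) * G ω ^ (q - 1) ∂μ ∂ν := e1
      _ ≤ ∫⁻ t, (∫⁻ ω, g (t, ω) ^ q ∂μ) ^ (1/q) * A ^ (1/q') ∂ν := by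
          refine lintegral_mono fun t => ?_
          calc ∫⁻ ω, g (t, ω) * G ω ^ (q-1) ∂μ
              ≤ (∫⁻ ω, g (t, ω) ^ q ∂μ) ^ (1/q) * (∫⁻ ω, (G ω ^ (q-1)) ^ q' ∂μ) ^ (1/q') :=
                ENNReal.lintegral_mul_le_Lp_mul_Lq μ hconj
                  (hg.comp measurable_prodMk_left).aemeasurable
                  ((hGm.pow_const _)).aemeasurable
            _ = (∫⁻ ω, g (t, ω) ^ q ∂μ) ^ (1/q) * A ^ (1/q') := by
                congr 2
                refine lintegral_congr fun ω => ?_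
                rw [← ENNReal.rpow_mul]
                congr 1
                rw [hq', mul_comm, div_mul_cancel₀ _ (by linarith : q - 1 ≠ 0)]
      _ = B * A ^ (1/q') :=
          lintegral_mul_const'' _ ((hg.pow_const q).lintegral_prod_right'.pow_const _).aemeasurable
  have hA1q' : A ^ (1/q') ≠ ⊤ := ENNReal.rpow_ne_top_of_nonneg hconj.symm.one_div_nonneg hfin
  have hA1q'0 : A ^ (1/q') ≠ 0 := by
    simp only [ne_eq, ENNReal.rpow_eq_zero_iff, not_or]
    exact ⟨fun h => h0 h.1, fun h => hfin h.1⟩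
  have hsplit : A = A ^ (1/q) * A ^ (1/q') := by
    rw [← ENNReal.rpow_add _ _ h0 hfin]
    have h1 : 1/q + 1/q' = 1 := by simpa [one_div] using hconj.inv_add_inv_eq_one
    rw [h1, ENNReal.rpow_one]
  refine (ENNReal.mul_le_mul_iff_left hA1q'0 hA1q').mp ?_
  rw [← hsplit]
  exact key

lemma ennreal_iSup_min_nat (a : ℝ≥0∞) : ⨆ n : ℕ, min a (n : ℝ≥0∞) = a := by
  refine le_antisymm (iSup_le fun n => min_le_left _ _) ?_
  rcases eq_or_ne a ⊤ with rfl | h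
  · calc (⊤ : ℝ≥0∞) = ⨆ n : ℕ, (n : ℝ≥0∞) := ENNReal.iSup_natCast.symm
      _ ≤ ⨆ n : ℕ, min ⊤ (n : ℝ≥0∞) := by simp
  · obtain ⟨n, hn⟩ := ENNReal.exists_nat_gt h
    calc a = min a n := (min_eq_left hn.le).symm
      _ ≤ ⨆ n : ℕ, min a (n : ℝ≥0∞) := le_iSup (fun n : ℕ => min a (n : ℝ≥0∞)) n

lemma mink_lintegral {Ω T : Type*} [MeasurableSpace Ω] [MeasurableSpace T]
    (μ : Measure Ω) [IsFiniteMeasure μ] (ν : Measure T) [SigmaFinite ν]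
    (f : T × Ω → ℝ≥0∞) (hf : Measurable f) (q : ℝ) (hq : 1 ≤ q) :
    (∫⁻ ω, (∫⁻ t, f (t, ω) ∂ν) ^ q ∂μ) ^ (1/q) ≤
      ∫⁻ t, (∫⁻ ω, f (t, ω) ^ q ∂μ) ^ (1/q) ∂ν := by
  rcases eq_or_lt_of_le hq with rfl | hq1
  · simp only [ENNReal.rpow_one, one_div_one]
    exact le_of_eq (lintegral_lintegral_swap (hf.comp measurable_swap).aemeasurable)
  have hq0 : (0:ℝ) < q := by linarith
  set B : ℝ≥0∞ := ∫⁻ t, (∫⁻ ω, f (t, ω) ^ q ∂μ) ^ (1/q) ∂ν with hB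
  set g : ℕ → T × Ω → ℝ≥0∞ :=
    fun n p => (spanningSets ν n).indicator (fun _ => (1:ℝ≥0∞)) p.1 * min (f p) n with hg
  have hgm : ∀ n, Measurable (g n) := fun n =>
    ((measurable_one.indicator (measurableSet_spanningSets ν n)).comp measurable_fst).mul
      (hf.min measurable_const)
  have hg_le_f : ∀ n p, g n p ≤ f p := by
    intro n p
    calc g n p ≤ 1 * min (f p) (n : ℝ≥0∞) :=
          mul_le_mul' (Set.indicator_le' (fun _ _ => le_rfl) (fun _ _ => zero_le_one) _) le_rfl
      _ ≤ f p := by rw [one_mul]; exact min_le_left _ _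
  have hg_mono : Monotone g := by
    intro n m hnm p
    exact mul_le_mul'
      (Set.indicator_le_indicator_of_subset (monotone_spanningSets ν hnm)
        (fun _ => zero_le) _)
      (min_le_min le_rfl (Nat.cast_le.2 hnm))
  have hg_sup : ∀ p, ⨆ n, g n p = f p := by
    intro p
    refine le_antisymm (iSup_le fun n => hg_le_f n p) ?_
    obtain ⟨N, hN⟩ : ∃ N, p.1 ∈ spanningSets ν N := by
      have : p.1 ∈ ⋃ n, spanningSets ν n := by rw [iUnion_spanningSets]; trivial
      exact Set.mem_iUnion.1 this
    conv_lhs => rw [← ennreal_iSup_min_nat (f p)]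
    refine iSup_le fun k => ?_
    calc min (f p) (k : ℝ≥0∞) ≤ g (max N k) p := by
          rw [hg]
          have hmem : p.1 ∈ spanningSets ν (max N k) :=
            monotone_spanningSets ν (le_max_left N k) hN
          simp only [Set.indicator_of_mem hmem, one_mul]
          exact min_le_min le_rfl (Nat.cast_le.2 (le_max_right N k))
      _ ≤ ⨆ n, g n p := le_iSup (fun n => g n p) (max N k)
  -- the truncated inner integrals
  set F : ℕ → Ω → ℝ≥0∞ := fun n ω => ∫⁻ t, g n (t, ω) ∂ν with hF
  have hFm : ∀ n, Measurable (F n) := fun n => (hgm n).lintegral_prod_left'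
  have hF_mono : Monotone F := fun n m hnm ω => lintegral_mono fun t => hg_mono hnm (t, ω)
  have hF_sup : ∀ ω, ⨆ n, F n ω = ∫⁻ t, f (t, ω) ∂ν := by
    intro ω
    have h := lintegral_iSup (μ := ν) (f := fun n t => g n (t, ω))
      (fun n => (hgm n).comp measurable_prodMk_right)
      (fun n m hnm t => hg_mono hnm (t, ω))
    calc ⨆ n, F n ω = ∫⁻ t, ⨆ n, g n (t, ω) ∂ν := h.symm
      _ = ∫⁻ t, f (t, ω) ∂ν := lintegral_congr fun t => hg_sup (t, ω)
  -- finiteness of truncated A's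
  have hAfin : ∀ n, ∫⁻ ω, F n ω ^ q ∂μ ≠ ⊤ := by
    intro n
    have hFb : ∀ ω, F n ω ≤ (n : ℝ≥0∞) * ν (spanningSets ν n) := by
      intro ω
      calc F n ω ≤ ∫⁻ t, (spanningSets ν n).indicator (fun _ => (n:ℝ≥0∞)) t ∂ν := by
            refine lintegral_mono fun t => ?_
            by_cases ht : t ∈ spanningSets ν n
            · simp only [hg, Set.indicator_of_mem ht, one_mul]
              exact min_le_right _ _
            · simp [hg, Set.indicator_of_notMem ht]
        _ = (n : ℝ≥0∞) * ν (spanningSets ν n) := by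
            rw [lintegral_indicator_const (measurableSet_spanningSets ν n)]
    have hc : ((n : ℝ≥0∞) * ν (spanningSets ν n)) ^ q ≠ ⊤ := by
      refine ENNReal.rpow_ne_top_of_nonneg hq0.le ?_
      exact ENNReal.mul_ne_top (by simp) (measure_spanningSets_lt_top ν n).ne
    have hle : ∫⁻ ω, F n ω ^ q ∂μ ≤ ((n : ℝ≥0∞) * ν (spanningSets ν n)) ^ q * μ Set.univ := by
      rw [← lintegral_const]
      exact lintegral_mono fun ω => ENNReal.rpow_le_rpow (hFb ω) hq0.le
    exact ne_top_of_le_ne_top (ENNReal.mul_ne_top hc (measure_ne_top μ _)) hle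
  -- truncated Minkowski
  have hstep : ∀ n, (∫⁻ ω, F n ω ^ q ∂μ) ^ (1/q) ≤ B := by
    intro n
    calc (∫⁻ ω, F n ω ^ q ∂μ) ^ (1/q)
        ≤ ∫⁻ t, (∫⁻ ω, g n (t, ω) ^ q ∂μ) ^ (1/q) ∂ν :=
          mink_step μ ν (g n) (hgm n) q hq1 (hAfin n)
      _ ≤ B := lintegral_mono fun t => ENNReal.rpow_le_rpow
          (lintegral_mono fun ω => ENNReal.rpow_le_rpow (hg_le_f n (t, ω)) hq0.le)
          (by positivity)
  -- pass to the limit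
  have hswap : ∀ ω, (∫⁻ t, f (t, ω) ∂ν) ^ q = ⨆ n, F n ω ^ q := by
    intro ω
    rw [← hF_sup ω]
    refine le_antisymm ?_ (iSup_le fun n => ENNReal.rpow_le_rpow (le_iSup (fun n => F n ω) n) hq0.le)
    have h1 : (⨆ n, F n ω) ≤ (⨆ n, F n ω ^ q) ^ (1/q) := by
      rw [one_div]
      refine iSup_le fun n => ?_
      have := ENNReal.rpow_le_rpow (le_iSup (fun n => F n ω ^ q) n)
        (by positivity : (0:ℝ) ≤ q⁻¹)
      rwa [ENNReal.rpow_rpow_inv hq0.ne'] at this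
    calc (⨆ n, F n ω) ^ q ≤ ((⨆ n, F n ω ^ q) ^ (1/q)) ^ q := ENNReal.rpow_le_rpow h1 hq0.le
      _ = ⨆ n, F n ω ^ q := by rw [one_div, ENNReal.rpow_inv_rpow hq0.ne']
  have hA_eq : ∫⁻ ω, (∫⁻ t, f (t, ω) ∂ν) ^ q ∂μ = ⨆ n, ∫⁻ ω, F n ω ^ q ∂μ := by
    simp_rw [hswap]
    exact lintegral_iSup (fun n => (hFm n).pow_const q)
      (fun n m hnm ω => ENNReal.rpow_le_rpow (hF_mono hnm ω) hq0.le)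
  have hAB : ∫⁻ ω, (∫⁻ t, f (t, ω) ∂ν) ^ q ∂μ ≤ B ^ q := by
    rw [hA_eq]
    refine iSup_le fun n => ?_
    have := ENNReal.rpow_le_rpow (hstep n) hq0.le
    rwa [one_div, ENNReal.rpow_inv_rpow hq0.ne'] at this
  calc (∫⁻ ω, (∫⁻ t, f (t, ω) ∂ν) ^ q ∂μ) ^ (1/q) ≤ (B ^ q) ^ (1/q) :=
        ENNReal.rpow_le_rpow hAB (by positivity)
    _ = B := by rw [one_div, ENNReal.rpow_rpow_inv hq0.ne']

theorem stmt16 {Ω T : Type*} [MeasurableSpace Ω] [MeasurableSpace T]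
    (μ : Measure Ω) [IsProbabilityMeasure μ] (ν : Measure T) [SigmaFinite ν]
    (ψ : ℝ → ℝ) (hψpos : ∀ u : ℝ, 1 ≤ u → 0 < ψ u)
    (hψmono : StrictMonoOn ψ (Set.Ici 1)) (hψcont : ContinuousOn ψ (Set.Ici 1))
    (hψtop : Tendsto ψ atTop atTop)
    (p : ℝ) (hp : 1 ≤ p)
    (X : T × Ω → ℝ) (hX : Measurable X)
    (hmem : ∀ t : T, MemF μ ψ (fun ω => X (t, ω)))
    (hint : Integrable (fun t => Fnorm μ ψ (fun ω => X (t, ω)) ^ p) ν) :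
    (∀ᵐ ω ∂μ, Integrable (fun t => |X (t, ω)| ^ p) ν) ∧
    Fnorm μ ψ (fun ω => (∫ t, |X (t, ω)| ^ p ∂ν) ^ (1 / p)) ≤
      ψ p / ψ 1 * (∫ t, Fnorm μ ψ (fun ω => X (t, ω)) ^ p ∂ν) ^ (1 / p) := by
  haveI : Nonempty {u : ℝ // 1 ≤ u} := ⟨⟨1, le_refl 1⟩⟩
  have hp0 : (0:ℝ) < p := lt_of_lt_of_le zero_lt_one hp
  set N : T → ℝ := fun t => Fnorm μ ψ (fun ω => X (t, ω)) with hN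
  have hN0 : ∀ t, 0 ≤ N t := by
    intro t
    exact Real.iSup_nonneg fun u => div_nonneg
      (Real.rpow_nonneg (integral_nonneg fun ω => Real.rpow_nonneg (abs_nonneg _) _) _)
      (hψpos u.1 u.2).le
  have hmoment : ∀ t : T, ∀ u : ℝ, 1 ≤ u →
      (∫ ω, |X (t, ω)| ^ u ∂μ) ^ (1/u) ≤ ψ u * N t := by
    intro t u hu
    have hle := le_ciSup (hmem t).2 (⟨u, hu⟩ : {u : ℝ // 1 ≤ u})
    rw [div_le_iff₀ (hψpos u hu)] at hle
    calc (∫ ω, |X (t, ω)| ^ u ∂μ) ^ (1/u) ≤ N t * ψ u := hle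
      _ = ψ u * N t := mul_comm _ _
  set f : T × Ω → ℝ≥0∞ := fun r => ENNReal.ofReal |X r| with hf
  have hfm : Measurable f := hX.abs.ennreal_ofReal
  have hlint : ∀ (t : T) (u : ℝ), 1 ≤ u →
      ∫⁻ ω, f (t, ω) ^ u ∂μ = ENNReal.ofReal (∫ ω, |X (t, ω)| ^ u ∂μ) := by
    intro t u hu
    rw [ofReal_integral_eq_lintegral_ofReal ((hmem t).1 u hu)
      (Filter.Eventually.of_forall fun ω => Real.rpow_nonneg (abs_nonneg _) u)]
    exact lintegral_congr fun ω =>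
      ENNReal.ofReal_rpow_of_nonneg (abs_nonneg _) (le_trans zero_le_one hu)
  have hintnn : ∀ (t : T) (u : ℝ), (0:ℝ) ≤ ∫ ω, |X (t, ω)| ^ u ∂μ := fun t u =>
    integral_nonneg fun ω => Real.rpow_nonneg (abs_nonneg _) _
  have hlintle : ∀ (t : T) (u : ℝ), 1 ≤ u →
      ∫⁻ ω, f (t, ω) ^ u ∂μ ≤ ENNReal.ofReal ((ψ u * N t) ^ u) := by
    intro t u hu
    have hu0 : (0:ℝ) < u := lt_of_lt_of_le zero_lt_one hu
    rw [hlint t u hu]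
    refine ENNReal.ofReal_le_ofReal ?_
    have h1 : ∫ ω, |X (t, ω)| ^ u ∂μ = ((∫ ω, |X (t, ω)| ^ u ∂μ) ^ (1/u)) ^ u := by
      rw [← Real.rpow_mul (hintnn t u), one_div, inv_mul_cancel₀ hu0.ne', Real.rpow_one]
    rw [h1]
    exact Real.rpow_le_rpow (Real.rpow_nonneg (hintnn t u) _) (hmoment t u hu) hu0.le
  set Cp : ℝ := ∫ t, N t ^ p ∂ν with hCpdef
  have hNp_nonneg : (0:ℝ) ≤ Cp := integral_nonneg fun t => Real.rpow_nonneg (hN0 t) p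
  have hNpae : AEMeasurable (fun t => ENNReal.ofReal (N t ^ p)) ν :=
    ENNReal.measurable_ofReal.comp_aemeasurable hint.aemeasurable
  have hCp : ENNReal.ofReal Cp = ∫⁻ t, ENNReal.ofReal (N t ^ p) ∂ν :=
    ofReal_integral_eq_lintegral_ofReal hint
      (Filter.Eventually.of_forall fun t => Real.rpow_nonneg (hN0 t) p)
  -- Part 1
  have hswapfin : ∫⁻ ω, ∫⁻ t, f (t, ω) ^ p ∂ν ∂μ ≠ ⊤ := by
    rw [lintegral_lintegral_swap (f := fun ω t => f (t, ω) ^ p)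
      (((hfm.pow_const p).comp measurable_swap).aemeasurable)]
    have hle : ∫⁻ t, ∫⁻ ω, f (t, ω) ^ p ∂μ ∂ν
        ≤ ENNReal.ofReal (ψ p ^ p) * ENNReal.ofReal Cp := by
      calc ∫⁻ t, ∫⁻ ω, f (t, ω) ^ p ∂μ ∂ν
          ≤ ∫⁻ t, ENNReal.ofReal ((ψ p * N t) ^ p) ∂ν :=
            lintegral_mono fun t => hlintle t p hp
        _ = ∫⁻ t, ENNReal.ofReal (ψ p ^ p) * ENNReal.ofReal (N t ^ p) ∂ν := by
            refine lintegral_congr fun t => ?_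
            rw [Real.mul_rpow (hψpos p hp).le (hN0 t),
              ENNReal.ofReal_mul (Real.rpow_nonneg (hψpos p hp).le p)]
        _ = ENNReal.ofReal (ψ p ^ p) * ENNReal.ofReal Cp := by
            rw [lintegral_const_mul'' _ hNpae, ← hCp]
    exact ne_top_of_le_ne_top
      (ENNReal.mul_ne_top ENNReal.ofReal_ne_top ENNReal.ofReal_ne_top) hle
  have hae_lt : ∀ᵐ ω ∂μ, ∫⁻ t, f (t, ω) ^ p ∂ν < ⊤ :=
    ae_lt_top ((hfm.pow_const p).lintegral_prod_left') hswapfin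
  have haeint : ∀ᵐ ω ∂μ, Integrable (fun t => |X (t, ω)| ^ p) ν := by
    filter_upwards [hae_lt] with ω hω
    have hm : Measurable (fun t => |X (t, ω)| ^ p) :=
      (Real.continuous_rpow_const hp0.le).measurable.comp
        (hX.comp measurable_prodMk_right).abs
    refine ⟨hm.aestronglyMeasurable, ?_⟩
    rw [hasFiniteIntegral_iff_ofReal
      (Filter.Eventually.of_forall fun t => Real.rpow_nonneg (abs_nonneg _) p)]
    have heq : ∫⁻ t, ENNReal.ofReal (|X (t, ω)| ^ p) ∂ν = ∫⁻ t, f (t, ω) ^ p ∂ν := by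
      refine lintegral_congr fun t => ?_
      have hft : f (t, ω) = ENNReal.ofReal |X (t, ω)| := rfl
      rw [hft]
      exact (ENNReal.ofReal_rpow_of_nonneg (abs_nonneg (X (t, ω))) hp0.le).symm
    rw [heq]
    exact hω
  refine ⟨haeint, ?_⟩
  -- Part 2
  set Y : Ω → ℝ := fun ω => (∫ t, |X (t, ω)| ^ p ∂ν) ^ (1/p) with hY
  have hinn : ∀ ω, (0:ℝ) ≤ ∫ t, |X (t, ω)| ^ p ∂ν := fun ω =>
    integral_nonneg fun t => Real.rpow_nonneg (abs_nonneg _) p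
  have hY0 : ∀ ω, 0 ≤ Y ω := fun ω => Real.rpow_nonneg (hinn ω) _
  have hYsm : StronglyMeasurable Y := by
    have h1 : StronglyMeasurable (fun ω => ∫ t, |X (t, ω)| ^ p ∂ν) :=
      StronglyMeasurable.integral_prod_left'
        ((Real.continuous_rpow_const hp0.le).measurable.comp hX.abs).stronglyMeasurable
    exact ((Real.continuous_rpow_const (by positivity)).measurable.comp
      h1.measurable).stronglyMeasurable
  have hYae : ∀ᵐ ω ∂μ, ENNReal.ofReal (∫ t, |X (t, ω)| ^ p ∂ν) = ∫⁻ t, f (t, ω) ^ p ∂ν := by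
    filter_upwards [haeint] with ω hω
    rw [ofReal_integral_eq_lintegral_ofReal hω
      (Filter.Eventually.of_forall fun t => Real.rpow_nonneg (abs_nonneg _) p)]
    refine lintegral_congr fun t => ?_
    have hft : f (t, ω) = ENNReal.ofReal |X (t, ω)| := rfl
    rw [hft]
    exact (ENNReal.ofReal_rpow_of_nonneg (abs_nonneg (X (t, ω))) hp0.le).symm
  set L : ℝ → ℝ≥0∞ := fun w => ∫⁻ ω, ENNReal.ofReal (|Y ω| ^ w) ∂μ with hL
  have hIntY : ∀ w : ℝ, 0 ≤ w → ∫ ω, |Y ω| ^ w ∂μ = (L w).toReal := by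
    intro w hw
    exact integral_eq_lintegral_of_nonneg_ae
      (Filter.Eventually.of_forall fun ω => Real.rpow_nonneg (abs_nonneg _) w)
      ((Real.continuous_rpow_const hw).measurable.comp
        hYsm.measurable.abs).aestronglyMeasurable
  -- key bound for v ≥ p via Minkowski
  have hkey : ∀ v : ℝ, 1 ≤ v → p ≤ v →
      L v ≤ ENNReal.ofReal (ψ v * Cp ^ (1/p)) ^ v := by
    intro v hv1 hpv
    have hv0 : (0:ℝ) < v := lt_of_lt_of_le zero_lt_one hv1
    set q : ℝ := v / p with hqdef
    have hq1 : (1:ℝ) ≤ q := (one_le_div hp0).2 hpv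
    have hq0 : (0:ℝ) < q := lt_of_lt_of_le zero_lt_one hq1
    have hmink := mink_lintegral μ ν (fun r => f r ^ p) (hfm.pow_const p) q hq1
    have hLid : ∫⁻ ω, (∫⁻ t, f (t, ω) ^ p ∂ν) ^ q ∂μ = L v := by
      refine lintegral_congr_ae ?_
      filter_upwards [hYae] with ω hω
      calc (∫⁻ t, f (t, ω) ^ p ∂ν) ^ q
          = (ENNReal.ofReal (∫ t, |X (t, ω)| ^ p ∂ν)) ^ q := by rw [hω]
        _ = ENNReal.ofReal ((∫ t, |X (t, ω)| ^ p ∂ν) ^ q) :=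
            ENNReal.ofReal_rpow_of_nonneg (hinn ω) hq0.le
        _ = ENNReal.ofReal (|Y ω| ^ v) := by
            congr 1
            rw [abs_of_nonneg (hY0 ω), hY]
            show (∫ t, |X (t, ω)| ^ p ∂ν) ^ q = ((∫ t, |X (t, ω)| ^ p ∂ν) ^ (1/p)) ^ v
            rw [← Real.rpow_mul (hinn ω)]
            congr 1
            rw [hqdef]
            field_simp
    have hR : ∫⁻ t, (∫⁻ ω, (f (t, ω) ^ p) ^ q ∂μ) ^ (1/q) ∂ν
        ≤ ENNReal.ofReal (ψ v ^ p * Cp) := by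
      calc ∫⁻ t, (∫⁻ ω, (f (t, ω) ^ p) ^ q ∂μ) ^ (1/q) ∂ν
          = ∫⁻ t, (∫⁻ ω, f (t, ω) ^ v ∂μ) ^ (1/q) ∂ν := by
            refine lintegral_congr fun t => ?_
            congr 1
            refine lintegral_congr fun ω => ?_
            rw [← ENNReal.rpow_mul]
            congr 1
            rw [hqdef]
            field_simp
        _ ≤ ∫⁻ t, (ENNReal.ofReal ((ψ v * N t) ^ v)) ^ (1/q) ∂ν :=
            lintegral_mono fun t => ENNReal.rpow_le_rpow (hlintle t v hv1) (by positivity)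
        _ = ∫⁻ t, ENNReal.ofReal (ψ v ^ p) * ENNReal.ofReal (N t ^ p) ∂ν := by
            refine lintegral_congr fun t => ?_
            rw [ENNReal.ofReal_rpow_of_nonneg
                (Real.rpow_nonneg (mul_nonneg (hψpos v hv1).le (hN0 t)) v)
                (by positivity : (0:ℝ) ≤ 1/q),
              ← Real.rpow_mul (mul_nonneg (hψpos v hv1).le (hN0 t)),
              show v * (1/q) = p by rw [hqdef]; field_simp,
              Real.mul_rpow (hψpos v hv1).le (hN0 t),
              ENNReal.ofReal_mul (Real.rpow_nonneg (hψpos v hv1).le p)]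
        _ = ENNReal.ofReal (ψ v ^ p) * ENNReal.ofReal Cp := by
            rw [lintegral_const_mul'' _ hNpae, ← hCp]
        _ = ENNReal.ofReal (ψ v ^ p * Cp) :=
            (ENNReal.ofReal_mul (Real.rpow_nonneg (hψpos v hv1).le p)).symm
    have h2 : (L v) ^ (1/q) ≤ ENNReal.ofReal (ψ v ^ p * Cp) := by
      rw [← hLid]
      exact le_trans hmink hR
    have h3 := ENNReal.rpow_le_rpow h2 hq0.le
    rw [one_div, ENNReal.rpow_inv_rpow hq0.ne'] at h3
    calc L v ≤ ENNReal.ofReal (ψ v ^ p * Cp) ^ q := h3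
      _ = ENNReal.ofReal (ψ v * Cp ^ (1/p)) ^ v := by
          rw [show ψ v ^ p * Cp = (ψ v * Cp ^ (1/p)) ^ p by
                rw [Real.mul_rpow (hψpos v hv1).le (Real.rpow_nonneg hNp_nonneg _),
                  ← Real.rpow_mul hNp_nonneg, one_div, inv_mul_cancel₀ hp0.ne',
                  Real.rpow_one],
            ← ENNReal.ofReal_rpow_of_nonneg
                (mul_nonneg (hψpos v hv1).le (Real.rpow_nonneg hNp_nonneg _)) hp0.le,
            ← ENNReal.rpow_mul]
          congr 1
          rw [hqdef]
          field_simp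
  -- Lyapunov
  have hLyap : ∀ u v : ℝ, 1 ≤ u → u ≤ v → (L u) ^ (1/u) ≤ (L v) ^ (1/v) := by
    intro u v hu huv
    have hv : (1:ℝ) ≤ v := le_trans hu huv
    have h := eLpNorm_le_eLpNorm_of_exponent_le (μ := μ) (f := Y)
      (ENNReal.ofReal_le_ofReal huv) hYsm.aestronglyMeasurable
    rw [eLpNorm_eq_lintegral_rpow_enorm_toReal
        (by simp [ENNReal.ofReal_eq_zero]; linarith) ENNReal.ofReal_ne_top,
      eLpNorm_eq_lintegral_rpow_enorm_toReal
        (by simp [ENNReal.ofReal_eq_zero]; linarith) ENNReal.ofReal_ne_top] at h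
    have hid : ∀ w : ℝ, 0 ≤ w →
        (∫⁻ ω, ‖Y ω‖ₑ ^ w ∂μ) = L w := by
      intro w hw
      refine lintegral_congr fun ω => ?_
      rw [← ofReal_norm, Real.norm_eq_abs,
        ENNReal.ofReal_rpow_of_nonneg (abs_nonneg _) hw]
    rw [ENNReal.toReal_ofReal (by linarith : (0:ℝ) ≤ u),
      ENNReal.toReal_ofReal (by linarith : (0:ℝ) ≤ v),
      hid u (by linarith), hid v (by linarith)] at h
    exact h
  -- conclude
  show (⨆ u : {u : ℝ // 1 ≤ u}, (∫ ω, |Y ω| ^ u.1 ∂μ) ^ (1 / u.1) / ψ u.1)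
      ≤ ψ p / ψ 1 * Cp ^ (1/p)
  refine ciSup_le ?_
  rintro ⟨u, hu⟩
  have hu0 : (0:ℝ) < u := lt_of_lt_of_le zero_lt_one hu
  set v : ℝ := max u p with hvdef
  have hv1 : (1:ℝ) ≤ v := le_trans hu (le_max_left _ _)
  have hv0 : (0:ℝ) < v := lt_of_lt_of_le zero_lt_one hv1
  have hpv : p ≤ v := le_max_right _ _
  have huv : u ≤ v := le_max_left _ _
  have hchain : (L u) ^ (1/u) ≤ ENNReal.ofReal (ψ v * Cp ^ (1/p)) := by
    calc (L u) ^ (1/u) ≤ (L v) ^ (1/v) := hLyap u v hu huv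
      _ ≤ (ENNReal.ofReal (ψ v * Cp ^ (1/p)) ^ v) ^ (1/v) :=
          ENNReal.rpow_le_rpow (hkey v hv1 hpv) (by positivity)
      _ = ENNReal.ofReal (ψ v * Cp ^ (1/p)) := by
          rw [show (1:ℝ)/v = v⁻¹ from one_div v, ENNReal.rpow_rpow_inv hv0.ne']
  have hreal : (∫ ω, |Y ω| ^ u ∂μ) ^ (1/u) ≤ ψ v * Cp ^ (1/p) := by
    rw [hIntY u hu0.le, ENNReal.toReal_rpow]
    exact ENNReal.toReal_le_of_le_ofReal
      (mul_nonneg (hψpos v hv1).le (Real.rpow_nonneg hNp_nonneg _)) hchain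
  have hψu := hψpos u hu
  have hψ1 := hψpos 1 le_rfl
  have hψ1u : ψ 1 ≤ ψ u := hψmono.monotoneOn (Set.mem_Ici.2 le_rfl) (Set.mem_Ici.2 hu) hu
  have hψ1p : ψ 1 ≤ ψ p := hψmono.monotoneOn (Set.mem_Ici.2 le_rfl) (Set.mem_Ici.2 hp) hp
  have hmono : ψ v / ψ u ≤ ψ p / ψ 1 := by
    rcases le_total u p with h | h
    · rw [show v = p from max_eq_right h]
      exact div_le_div_of_nonneg_left (hψpos p hp).le hψ1 hψ1u
    · rw [show v = u from max_eq_left h, div_self hψu.ne']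
      exact (one_le_div hψ1).2 hψ1p
  calc (∫ ω, |Y ω| ^ u ∂μ) ^ (1/u) / ψ u ≤ (ψ v * Cp ^ (1/p)) / ψ u :=
        (div_le_div_iff_of_pos_right hψu).2 hreal
    _ = (ψ v / ψ u) * Cp ^ (1/p) := by ring
    _ ≤ (ψ p / ψ 1) * Cp ^ (1/p) :=
        mul_le_mul_of_nonneg_right hmono (Real.rpow_nonneg hNp_nonneg _)
end

section
/- Suppose the C-functions W and V satisfy: W is an Orlicz C-function (even, convex, increasing for x>0, W(0)=0) and V is inverse to a C-function. Then the functional ‖ξ‖_{V,W} = (sup_{x>0} V(x) W^{(−1)}(P(|ξ| > x)))^{1/2} satisfies the triangle inequality: ‖ξ+η‖_{V,W} ≤ ‖ξ‖_{V,W} + ‖η‖_{V,W}. -/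
open MeasureTheory Real

/-- The prenorm of the space `D_{V,W}(Ω)`, where `Winv` denotes the inverse of `W`
on the positive half-line. -/
noncomputable def DVWnorm {Ω : Type*} [MeasurableSpace Ω] (μ : Measure Ω)
    (V Winv : ℝ → ℝ) (ξ : Ω → ℝ) : ℝ :=
  Real.sqrt (⨆ x : {x : ℝ // 0 < x}, V x.1 * Winv ((μ {ω | x.1 < |ξ ω|}).toReal))

theorem stmt17 {Ω : Type*} [MeasurableSpace Ω] (μ : Measure Ω) [IsProbabilityMeasure μ]
    (W V Winv : ℝ → ℝ)
    -- `W` is an Orlicz C-function: even, convex, continuous, increasing on `x > 0`, `W 0 = 0`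
    (hWeven : ∀ x, W (-x) = W x) (hWconv : ConvexOn ℝ Set.univ W) (hWcont : Continuous W)
    (hWmono : StrictMonoOn W (Set.Ici 0)) (hW0 : W 0 = 0)
    -- `Winv` is the inverse of `W` on the nonnegative half-line
    (hWinv1 : ∀ x, 0 ≤ x → Winv (W x) = x) (hWinv2 : ∀ y, 0 ≤ y → W (Winv y) = y)
    -- `V` is the inverse (on the nonnegative half-line) of a C-function `U`
    (hV : ∃ U : ℝ → ℝ, (∀ x, U (-x) = U x) ∧ ConvexOn ℝ Set.univ U ∧ Continuous U ∧
      StrictMonoOn U (Set.Ici 0) ∧ U 0 = 0 ∧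
      (∀ x, 0 ≤ x → V (U x) = x) ∧ (∀ y, 0 ≤ y → U (V y) = y))
    (ξ η : Ω → ℝ) (hmξ : Measurable ξ) (hmη : Measurable η)
    (hbξ : BddAbove (Set.range fun x : {x : ℝ // 0 < x} =>
      V x.1 * Winv ((μ {ω | x.1 < |ξ ω|}).toReal)))
    (hbη : BddAbove (Set.range fun x : {x : ℝ // 0 < x} =>
      V x.1 * Winv ((μ {ω | x.1 < |η ω|}).toReal))) :
    DVWnorm μ V Winv (fun ω => ξ ω + η ω) ≤ DVWnorm μ V Winv ξ + DVWnorm μ V Winv η := by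
  classical
  obtain ⟨U, hUeven, hUconv, hUcont, hUmono, hU0, hVU, hUV⟩ := hV
  haveI : Nonempty {x : ℝ // (0:ℝ) < x} := ⟨⟨1, one_pos⟩⟩
  -- `Winv` is nonnegative on nonnegative reals
  have hWinv_nonneg : ∀ p, 0 ≤ p → 0 ≤ Winv p := by
    intro p hp
    by_contra h
    push_neg at h
    have h1 : W (-(Winv p)) = W (Winv p) := hWeven _
    have h2 : Winv (W (-(Winv p))) = -(Winv p) := hWinv1 _ (by linarith)
    rw [h1, hWinv2 p hp] at h2
    linarith
  have hV_nonneg : ∀ p, 0 ≤ p → 0 ≤ V p := by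
    intro p hp
    by_contra h
    push_neg at h
    have h1 : U (-(V p)) = U (V p) := hUeven _
    have h2 : V (U (-(V p))) = -(V p) := hVU _ (by linarith)
    rw [h1, hUV p hp] at h2
    linarith
  -- reversed monotonicity
  have hWrev : ∀ a b, 0 ≤ a → 0 ≤ b → W a ≤ W b → a ≤ b := by
    intro a b ha hb hab
    by_contra h
    push_neg at h
    exact absurd (hWmono (Set.mem_Ici.2 hb) (Set.mem_Ici.2 ha) h) (by linarith)
  have hUrev : ∀ a b, 0 ≤ a → 0 ≤ b → U a ≤ U b → a ≤ b := by
    intro a b ha hb hab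
    by_contra h
    push_neg at h
    exact absurd (hUmono (Set.mem_Ici.2 hb) (Set.mem_Ici.2 ha) h) (by linarith)
  have hWinv_mono : ∀ p q, 0 ≤ p → p ≤ q → Winv p ≤ Winv q := by
    intro p q hp hpq
    refine hWrev _ _ (hWinv_nonneg p hp) (hWinv_nonneg q (hp.trans hpq)) ?_
    rw [hWinv2 p hp, hWinv2 q (hp.trans hpq)]
    exact hpq
  have hV_mono : ∀ p q, 0 ≤ p → p ≤ q → V p ≤ V q := by
    intro p q hp hpq
    refine hUrev _ _ (hV_nonneg p hp) (hV_nonneg q (hp.trans hpq)) ?_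
    rw [hUV p hp, hUV q (hp.trans hpq)]
    exact hpq
  -- `W` is superadditive on nonnegative reals
  have hWsuper : ∀ a b, 0 ≤ a → 0 ≤ b → W a + W b ≤ W (a + b) := by
    intro a b ha hb
    rcases eq_or_lt_of_le (add_nonneg ha hb) with h | h
    · have ha0 : a = 0 := by linarith
      have hb0 : b = 0 := by linarith
      simp [ha0, hb0, hW0]
    · have ht : (0:ℝ) ≤ a / (a + b) := div_nonneg ha h.le
      have hs : (0:ℝ) ≤ b / (a + b) := div_nonneg hb h.le
      have hts : a / (a + b) + b / (a + b) = 1 := by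
        rw [← add_div, div_self h.ne']
      have hst : b / (a + b) + a / (a + b) = 1 := by linarith
      have h1 : W a ≤ (a / (a + b)) * W (a + b) := by
        have hc := hWconv.2 (Set.mem_univ (a + b)) (Set.mem_univ (0:ℝ)) ht hs hts
        have heq : (a / (a + b)) • (a + b) + (b / (a + b)) • (0:ℝ) = a := by
          simp only [smul_eq_mul, mul_zero, add_zero]
          field_simp
        rw [heq] at hc
        simpa [smul_eq_mul, hW0] using hc
      have h2 : W b ≤ (b / (a + b)) * W (a + b) := by
        have hc := hWconv.2 (Set.mem_univ (a + b)) (Set.mem_univ (0:ℝ)) hs ht hst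
        have heq : (b / (a + b)) • (a + b) + (a / (a + b)) • (0:ℝ) = b := by
          simp only [smul_eq_mul, mul_zero, add_zero]
          field_simp
        rw [heq] at hc
        simpa [smul_eq_mul, hW0] using hc
      calc W a + W b ≤ (a / (a + b)) * W (a + b) + (b / (a + b)) * W (a + b) :=
            add_le_add h1 h2
        _ = W (a + b) := by rw [← add_mul, hts, one_mul]
  -- `Winv` is subadditive on nonnegative reals
  have hWinv_subadd : ∀ p q, 0 ≤ p → 0 ≤ q → Winv (p + q) ≤ Winv p + Winv q := by
    intro p q hp hq
    refine hWrev _ _ (hWinv_nonneg _ (add_nonneg hp hq))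
      (add_nonneg (hWinv_nonneg p hp) (hWinv_nonneg q hq)) ?_
    rw [hWinv2 _ (add_nonneg hp hq)]
    calc p + q = W (Winv p) + W (Winv q) := by rw [hWinv2 p hp, hWinv2 q hq]
      _ ≤ W (Winv p + Winv q) := hWsuper _ _ (hWinv_nonneg p hp) (hWinv_nonneg q hq)
  -- `U` is superhomogeneous, hence `V (a*y) ≤ a * V y` for `a ≥ 1`
  have hVhom : ∀ a y, 1 ≤ a → 0 ≤ y → V (a * y) ≤ a * V y := by
    intro a y ha hy
    have ha0 : 0 < a := lt_of_lt_of_le one_pos ha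
    have hz : 0 ≤ V y := hV_nonneg y hy
    have hUz : U (V y) = y := hUV y hy
    have ht : (0:ℝ) ≤ 1 / a := le_of_lt (one_div_pos.2 ha0)
    have hs : (0:ℝ) ≤ 1 - 1 / a := by
      have : 1 / a ≤ 1 := by rw [div_le_one ha0]; exact ha
      linarith
    have hkey : a * y ≤ U (a * V y) := by
      have hc := hUconv.2 (Set.mem_univ (a * V y)) (Set.mem_univ (0:ℝ)) ht hs (by ring)
      have heq : (1 / a) • (a * V y) + (1 - 1 / a) • (0:ℝ) = V y := by
        simp only [smul_eq_mul, mul_zero, add_zero]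
        field_simp
      rw [heq] at hc
      simp only [smul_eq_mul, hU0, mul_zero, add_zero, hUz] at hc
      calc a * y ≤ a * (1 / a * U (a * V y)) := mul_le_mul_of_nonneg_left hc ha0.le
        _ = U (a * V y) := by field_simp
    have hVay : 0 ≤ a * V y := mul_nonneg ha0.le hz
    have h1 : V (a * y) ≤ V (U (a * V y)) :=
      hV_mono _ _ (mul_nonneg ha0.le hy) hkey
    rwa [hVU _ hVay] at h1
  -- unfold the definition and name the suprema
  simp only [DVWnorm]
  set A := ⨆ x : {x : ℝ // (0:ℝ) < x}, V x.1 * Winv ((μ {ω | x.1 < |ξ ω|}).toReal) with hA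
  set B := ⨆ x : {x : ℝ // (0:ℝ) < x}, V x.1 * Winv ((μ {ω | x.1 < |η ω|}).toReal) with hB
  set S := ⨆ x : {x : ℝ // (0:ℝ) < x}, V x.1 * Winv ((μ {ω | x.1 < |ξ ω + η ω|}).toReal)
    with hS
  have hA0 : 0 ≤ A := by
    rw [hA]
    refine le_trans ?_ (le_ciSup hbξ ⟨1, one_pos⟩)
    exact mul_nonneg (hV_nonneg _ zero_le_one) (hWinv_nonneg _ ENNReal.toReal_nonneg)
  have hB0 : 0 ≤ B := by
    rw [hB]
    refine le_trans ?_ (le_ciSup hbη ⟨1, one_pos⟩)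
    exact mul_nonneg (hV_nonneg _ zero_le_one) (hWinv_nonneg _ ENNReal.toReal_nonneg)
  -- key pointwise bound
  have hkeybound : ∀ α : ℝ, 0 < α → α < 1 → ∀ x : {x : ℝ // (0:ℝ) < x},
      V x.1 * Winv ((μ {ω | x.1 < |ξ ω + η ω|}).toReal) ≤
        (1 / α) * A + (1 / (1 - α)) * B := by
    intro α hα hα1 x
    have h1α : 0 < 1 - α := by linarith
    have hαx : 0 < α * x.1 := mul_pos hα x.2
    have hβx : 0 < (1 - α) * x.1 := mul_pos h1α x.2
    have hsubset : {ω | x.1 < |ξ ω + η ω|} ⊆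
        {ω | α * x.1 < |ξ ω|} ∪ {ω | (1 - α) * x.1 < |η ω|} := by
      intro ω hω
      simp only [Set.mem_setOf_eq] at hω
      by_contra h
      simp only [Set.mem_union, Set.mem_setOf_eq, not_or, not_lt] at h
      have := abs_add_le (ξ ω) (η ω)
      nlinarith [h.1, h.2]
    have hPle : (μ {ω | x.1 < |ξ ω + η ω|}).toReal ≤
        (μ {ω | α * x.1 < |ξ ω|}).toReal + (μ {ω | (1 - α) * x.1 < |η ω|}).toReal := by
      calc (μ {ω | x.1 < |ξ ω + η ω|}).toReal
          ≤ (μ ({ω | α * x.1 < |ξ ω|} ∪ {ω | (1 - α) * x.1 < |η ω|})).toReal :=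
            ENNReal.toReal_mono (measure_ne_top _ _) (measure_mono hsubset)
        _ ≤ ((μ {ω | α * x.1 < |ξ ω|}) + (μ {ω | (1 - α) * x.1 < |η ω|})).toReal := by
            refine ENNReal.toReal_mono ?_ (measure_union_le _ _)
            exact ENNReal.add_ne_top.2 ⟨measure_ne_top _ _, measure_ne_top _ _⟩
        _ = (μ {ω | α * x.1 < |ξ ω|}).toReal + (μ {ω | (1 - α) * x.1 < |η ω|}).toReal :=
            ENNReal.toReal_add (measure_ne_top _ _) (measure_ne_top _ _)
    set p := (μ {ω | α * x.1 < |ξ ω|}).toReal with hp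
    set q := (μ {ω | (1 - α) * x.1 < |η ω|}).toReal with hq
    have hp0 : 0 ≤ p := ENNReal.toReal_nonneg
    have hq0 : 0 ≤ q := ENNReal.toReal_nonneg
    have hWinv_le : Winv ((μ {ω | x.1 < |ξ ω + η ω|}).toReal) ≤ Winv p + Winv q :=
      le_trans (hWinv_mono _ _ ENNReal.toReal_nonneg hPle) (hWinv_subadd p q hp0 hq0)
    have hVx1 : V x.1 ≤ (1 / α) * V (α * x.1) := by
      have h := hVhom (1/α) (α * x.1) (by rw [le_div_iff₀ hα]; linarith) hαx.le
      have heq : (1/α) * (α * x.1) = x.1 := by field_simp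
      rwa [heq] at h
    have hVx2 : V x.1 ≤ (1 / (1 - α)) * V ((1 - α) * x.1) := by
      have h := hVhom (1/(1-α)) ((1-α) * x.1) (by rw [le_div_iff₀ h1α]; linarith) hβx.le
      have heq : (1/(1-α)) * ((1-α) * x.1) = x.1 := by field_simp
      rwa [heq] at h
    have hFA : V (α * x.1) * Winv p ≤ A := by
      rw [hA]; exact le_ciSup hbξ ⟨α * x.1, hαx⟩
    have hFB : V ((1 - α) * x.1) * Winv q ≤ B := by
      rw [hB]; exact le_ciSup hbη ⟨(1 - α) * x.1, hβx⟩
    have hWp : 0 ≤ Winv p := hWinv_nonneg p hp0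
    have hWq : 0 ≤ Winv q := hWinv_nonneg q hq0
    have hαinv : (0:ℝ) ≤ 1 / α := le_of_lt (one_div_pos.2 hα)
    have hβinv : (0:ℝ) ≤ 1 / (1 - α) := le_of_lt (one_div_pos.2 h1α)
    calc V x.1 * Winv ((μ {ω | x.1 < |ξ ω + η ω|}).toReal)
        ≤ V x.1 * (Winv p + Winv q) :=
          mul_le_mul_of_nonneg_left hWinv_le (hV_nonneg _ x.2.le)
      _ = V x.1 * Winv p + V x.1 * Winv q := by ring
      _ ≤ ((1/α) * V (α * x.1)) * Winv p + ((1/(1-α)) * V ((1-α) * x.1)) * Winv q :=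
          add_le_add (mul_le_mul_of_nonneg_right hVx1 hWp)
            (mul_le_mul_of_nonneg_right hVx2 hWq)
      _ = (1/α) * (V (α * x.1) * Winv p) + (1/(1-α)) * (V ((1-α) * x.1) * Winv q) := by
          ring
      _ ≤ (1/α) * A + (1/(1-α)) * B :=
          add_le_add (mul_le_mul_of_nonneg_left hFA hαinv)
            (mul_le_mul_of_nonneg_left hFB hβinv)
  have hSle : ∀ α : ℝ, 0 < α → α < 1 → S ≤ (1 / α) * A + (1 / (1 - α)) * B := by
    intro α hα hα1
    rw [hS]
    exact ciSup_le (hkeybound α hα hα1)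
  -- S ≤ (√A + √B)^2 by the δ-perturbation argument
  have hSfinal : S ≤ (Real.sqrt A + Real.sqrt B)^2 := by
    have hδ : ∀ δ : ℝ, 0 < δ → S ≤ (Real.sqrt (A + δ) + Real.sqrt (B + δ))^2 := by
      intro δ hδ
      set a := Real.sqrt (A + δ) with ha
      set b := Real.sqrt (B + δ) with hb
      have ha0 : 0 < a := Real.sqrt_pos.2 (by linarith)
      have hb0 : 0 < b := Real.sqrt_pos.2 (by linarith)
      have ha2 : a^2 = A + δ := Real.sq_sqrt (by linarith)
      have hb2 : b^2 = B + δ := Real.sq_sqrt (by linarith)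
      have hab : 0 < a + b := by linarith
      set α := a / (a + b) with hα
      have hα0 : 0 < α := div_pos ha0 hab
      have hα1 : α < 1 := by
        rw [hα, div_lt_one hab]; linarith
      have h1 : 1 / α = (a + b) / a := by
        rw [hα]; rw [one_div_div]
      have h2 : 1 - α = b / (a + b) := by
        rw [hα]; field_simp
        ring
      have h3 : 1 / (1 - α) = (a + b) / b := by
        rw [h2, one_div_div]
      have hkey := hSle α hα0 hα1
      rw [h1, h3] at hkey
      have hda : (0:ℝ) ≤ (a + b) / a := le_of_lt (div_pos hab ha0)
      have hdb : (0:ℝ) ≤ (a + b) / b := le_of_lt (div_pos hab hb0)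
      have hA' : (a + b) / a * A ≤ (a + b) / a * (A + δ) := by
        apply mul_le_mul_of_nonneg_left _ hda; linarith
      have hB' : (a + b) / b * B ≤ (a + b) / b * (B + δ) := by
        apply mul_le_mul_of_nonneg_left _ hdb; linarith
      have heq : (a + b) / a * (A + δ) + (a + b) / b * (B + δ) = (a + b)^2 := by
        rw [← ha2, ← hb2]
        field_simp
      linarith
    have htend : Filter.Tendsto (fun δ : ℝ => (Real.sqrt (A + δ) + Real.sqrt (B + δ))^2)
        (nhdsWithin 0 (Set.Ioi 0)) (nhds ((Real.sqrt A + Real.sqrt B)^2)) := by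
      have hc : Continuous (fun δ : ℝ => (Real.sqrt (A + δ) + Real.sqrt (B + δ))^2) :=
        (((Real.continuous_sqrt.comp (continuous_const.add continuous_id)).add
          (Real.continuous_sqrt.comp (continuous_const.add continuous_id))).pow 2)
      have h0 := hc.tendsto 0
      simp only [add_zero] at h0
      exact h0.mono_left nhdsWithin_le_nhds
    exact ge_of_tendsto htend (Filter.eventually_of_mem self_mem_nhdsWithin
      (fun δ hδ' => hδ δ hδ'))
  -- conclude
  have hnn : 0 ≤ Real.sqrt A + Real.sqrt B := by positivity
  calc Real.sqrt S ≤ Real.sqrt ((Real.sqrt A + Real.sqrt B)^2) :=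
        Real.sqrt_le_sqrt hSfinal
    _ = Real.sqrt A + Real.sqrt B := Real.sqrt_sq hnn
end

section
/- Let W(x) = |x|^a and V(x) = |x|^b with a, b > 0, and let ξ_k be random variables with finite D_{V,W}-prenorms ‖ξ_k‖ = (sup_{x>0} x^b (P(|ξ_k|>x))^{1/a})^{1/2}. If μ = Σ_{k=1}^∞ ‖ξ_k‖^{2a/(ab+1)} < ∞, then for every x ≥ μ: P( |Σ_{k=1}^∞ ξ_k| > x ) ≤ x^{−ab} ( Σ_{k=1}^∞ ‖ξ_k‖^{2a/(ab+1)} )^{ab+1}. -/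
open MeasureTheory Real

/-- The prenorm of the space `D_{V,W}(Ω)` with `W x = |x|^a`, `V x = |x|^b`, so that
`W⁻¹ t = t^(1/a)`. -/
noncomputable def Dnorm {Ω : Type*} [MeasurableSpace Ω] (μ : Measure Ω)
    (a b : ℝ) (ξ : Ω → ℝ) : ℝ :=
  Real.sqrt (⨆ x : {x : ℝ // 0 < x},
    x.1 ^ b * ((μ {ω | x.1 < |ξ ω|}).toReal) ^ (1 / a))

lemma dnorm_tail_bound {Ω : Type*} [MeasurableSpace Ω] (μ : Measure Ω) [IsProbabilityMeasure μ]
    (a b : ℝ) (ha : 0 < a) (hb : 0 < b) (ξ : Ω → ℝ)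
    (hbdd : BddAbove (Set.range fun x : {x : ℝ // 0 < x} =>
      x.1 ^ b * ((μ {ω | x.1 < |ξ ω|}).toReal) ^ (1 / a)))
    (t : ℝ) (ht : 0 < t) :
    t ^ (a * b) * (μ {ω | t < |ξ ω|}).toReal ≤ Dnorm μ a b ξ ^ (2 * a) := by
  set T := ⨆ x : {x : ℝ // 0 < x},
      x.1 ^ b * ((μ {ω | x.1 < |ξ ω|}).toReal) ^ (1 / a) with hT
  have hP : (0:ℝ) ≤ (μ {ω | t < |ξ ω|}).toReal := ENNReal.toReal_nonneg
  have h1 : t ^ b * ((μ {ω | t < |ξ ω|}).toReal) ^ (1 / a) ≤ T :=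
    le_ciSup hbdd ⟨t, ht⟩
  have hT0 : (0:ℝ) ≤ T := by
    refine le_trans ?_ (le_ciSup hbdd ⟨1, one_pos⟩)
    positivity
  have hD : Dnorm μ a b ξ ^ (2 * a) = T ^ a := by
    rw [Dnorm, ← hT, show (2 * a : ℝ) = 2 * a from rfl, Real.rpow_mul (Real.sqrt_nonneg T)]
    congr 1
    rw [show ((2:ℝ)) = ((2:ℕ):ℝ) by norm_num, Real.rpow_natCast, sq_sqrt hT0]
  have h2 : (t ^ b * ((μ {ω | t < |ξ ω|}).toReal) ^ (1 / a)) ^ a ≤ T ^ a :=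
    Real.rpow_le_rpow (by positivity) h1 ha.le
  rw [Real.mul_rpow (by positivity) (by positivity), ← Real.rpow_mul ht.le,
    ← Real.rpow_mul hP, one_div, inv_mul_cancel₀ ha.ne', Real.rpow_one, mul_comm b a] at h2
  rw [hD]
  exact h2

lemma dnorm_zero_ae {Ω : Type*} [MeasurableSpace Ω] (μ : Measure Ω) [IsProbabilityMeasure μ]
    (a b : ℝ) (ha : 0 < a) (hb : 0 < b) (ξ : Ω → ℝ)
    (hbdd : BddAbove (Set.range fun x : {x : ℝ // 0 < x} =>
      x.1 ^ b * ((μ {ω | x.1 < |ξ ω|}).toReal) ^ (1 / a)))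
    (h0 : Dnorm μ a b ξ = 0) :
    μ {ω | 0 < |ξ ω|} = 0 := by
  have key : ∀ t : ℝ, 0 < t → μ {ω | t < |ξ ω|} = 0 := by
    intro t ht
    have := dnorm_tail_bound μ a b ha hb ξ hbdd t ht
    rw [h0, Real.zero_rpow (by positivity)] at this
    have htp : (0:ℝ) < t ^ (a*b) := Real.rpow_pos_of_pos ht _
    have : (μ {ω | t < |ξ ω|}).toReal ≤ 0 := by
      nlinarith [ENNReal.toReal_nonneg (a := μ {ω | t < |ξ ω|})]
    have h' : (μ {ω | t < |ξ ω|}).toReal = 0 :=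
      le_antisymm this ENNReal.toReal_nonneg
    exact (ENNReal.toReal_eq_zero_iff _).mp h' |>.resolve_right (measure_ne_top μ _)
  have hsub : {ω | 0 < |ξ ω|} ⊆ ⋃ n : ℕ, {ω | (1:ℝ)/(n+1) < |ξ ω|} := by
    intro ω hω
    have hω' : 0 < |ξ ω| := hω
    obtain ⟨n, hn⟩ := exists_nat_one_div_lt hω'
    exact Set.mem_iUnion.mpr ⟨n, hn⟩
  refine le_antisymm ?_ zero_le
  calc μ {ω | 0 < |ξ ω|} ≤ μ (⋃ n : ℕ, {ω | (1:ℝ)/(n+1) < |ξ ω|}) := measure_mono hsub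
  _ ≤ ∑' n : ℕ, μ {ω | (1:ℝ)/(n+1) < |ξ ω|} := measure_iUnion_le _
  _ = 0 := by
      have hz : ∀ n : ℕ, μ {ω | (1:ℝ)/(n+1) < |ξ ω|} = 0 := fun n => key _ (by positivity)
      simp only [hz]
      exact tsum_zero

theorem stmt18 {Ω : Type*} [MeasurableSpace Ω] (μ : Measure Ω) [IsProbabilityMeasure μ]
    (a b : ℝ) (ha : 0 < a) (hb : 0 < b)
    (ξ : ℕ → Ω → ℝ) (hmeas : ∀ k, Measurable (ξ k))
    (hbdd : ∀ k, BddAbove (Set.range fun x : {x : ℝ // 0 < x} =>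
      x.1 ^ b * ((μ {ω | x.1 < |ξ k ω|}).toReal) ^ (1 / a)))
    (hsum : Summable fun k => Dnorm μ a b (ξ k) ^ (2 * a / (a * b + 1)))
    (x : ℝ) (hx : (∑' k, Dnorm μ a b (ξ k) ^ (2 * a / (a * b + 1))) ≤ x) :
    (μ {ω | x < |∑' k, ξ k ω|}).toReal ≤
      (∑' k, Dnorm μ a b (ξ k) ^ (2 * a / (a * b + 1))) ^ (a * b + 1) / x ^ (a * b) := by
  set c : ℝ := 2 * a / (a * b + 1) with hc
  have hab1 : (0:ℝ) < a * b + 1 := by positivity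
  have hcpos : 0 < c := by positivity
  set n : ℕ → ℝ := fun k => Dnorm μ a b (ξ k) with hn
  have hn0 : ∀ k, 0 ≤ n k := fun k => Real.sqrt_nonneg _
  set S : ℝ := ∑' k, n k ^ c with hS
  have hS0 : 0 ≤ S := tsum_nonneg fun k => Real.rpow_nonneg (hn0 k) c
  have hx0 : 0 ≤ x := le_trans hS0 hx
  have hRHSnn : 0 ≤ S ^ (a*b+1) / x ^ (a*b) :=
    div_nonneg (Real.rpow_nonneg hS0 _) (Real.rpow_nonneg hx0 _)
  rcases eq_or_lt_of_le hS0 with hS0' | hSpos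
  · -- S = 0 : every ξ k is a.s. zero
    have hzero : ∀ k, n k = 0 := by
      intro k
      by_contra hne
      have hkpos : 0 < n k := lt_of_le_of_ne (hn0 k) (Ne.symm hne)
      have h1 : 0 < n k ^ c := Real.rpow_pos_of_pos hkpos c
      have hle : n k ^ c ≤ S := Summable.le_tsum hsum k fun j _ => Real.rpow_nonneg (hn0 j) c
      linarith
    have hsub : {ω | x < |∑' k, ξ k ω|} ⊆ ⋃ k, {ω | 0 < |ξ k ω|} := by
      intro ω hω
      by_contra h
      simp only [Set.mem_iUnion, Set.mem_setOf_eq, not_exists, not_lt] at h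
      have hz : ∀ k, ξ k ω = 0 := fun k => abs_eq_zero.mp (le_antisymm (h k) (abs_nonneg _))
      have : (∑' k, ξ k ω) = 0 := by simp [hz]
      rw [Set.mem_setOf_eq, this, abs_zero] at hω
      linarith
    have hLHS : μ {ω | x < |∑' k, ξ k ω|} = 0 := by
      refine le_antisymm ?_ zero_le
      calc μ {ω | x < |∑' k, ξ k ω|} ≤ μ (⋃ k, {ω | 0 < |ξ k ω|}) := measure_mono hsub
      _ ≤ ∑' k, μ {ω | 0 < |ξ k ω|} := measure_iUnion_le _
      _ = 0 := by
          simp only [fun k => dnorm_zero_ae μ a b ha hb (ξ k) (hbdd k) (hzero k)]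
          exact tsum_zero
    rw [hLHS]
    simpa using hRHSnn
  · -- S > 0
    have hxpos : 0 < x := lt_of_lt_of_le hSpos hx
    set α : ℕ → ℝ := fun k => n k ^ c / S with hα
    have hα0 : ∀ k, 0 ≤ α k := fun k => div_nonneg (Real.rpow_nonneg (hn0 k) c) hS0
    have hαsum : Summable α := hsum.div_const S
    have hαtsum : (∑' k, α k) = 1 := by
      rw [hα]
      rw [tsum_div_const]
      exact div_self hSpos.ne'
    -- event inclusion
    have hsub : {ω | x < |∑' k, ξ k ω|} ⊆ ⋃ k, {ω | α k * x < |ξ k ω|} := by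
      intro ω hω
      by_contra h
      simp only [Set.mem_iUnion, Set.mem_setOf_eq, not_exists, not_lt] at h
      have hbound : |∑' k, ξ k ω| ≤ x := by
        by_cases hsummable : Summable fun k => ξ k ω
        · have habs : Summable fun k => |ξ k ω| :=
            Summable.of_nonneg_of_le (fun k => abs_nonneg _) h (hαsum.mul_right x)
          calc |∑' k, ξ k ω| ≤ ∑' k, |ξ k ω| := by
                simpa [Real.norm_eq_abs] using norm_tsum_le_tsum_norm (f := fun k => ξ k ω)
                  (by simpa [Real.norm_eq_abs] using habs)
          _ ≤ ∑' k, α k * x := Summable.tsum_le_tsum h habs (hαsum.mul_right x)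
          _ = (∑' k, α k) * x := tsum_mul_right
          _ = x := by rw [hαtsum, one_mul]
        · rw [tsum_eq_zero_of_not_summable hsummable, abs_zero]
          exact hx0
      rw [Set.mem_setOf_eq] at hω
      linarith
    -- per-k bound
    have hkey : ∀ k, μ {ω | α k * x < |ξ k ω|} ≤
        ENNReal.ofReal (n k ^ c * (S ^ (a*b) / x ^ (a*b))) := by
      intro k
      rcases eq_or_lt_of_le (hn0 k) with h0 | hkpos
      · have hα0' : α k * x = 0 := by
          rw [hα]; simp [← h0, Real.zero_rpow hcpos.ne']
        rw [hα0']
        rw [dnorm_zero_ae μ a b ha hb (ξ k) (hbdd k) h0.symm]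
        exact zero_le
      · have hαpos : 0 < α k := div_pos (Real.rpow_pos_of_pos hkpos c) hSpos
        have htpos : 0 < α k * x := mul_pos hαpos hxpos
        have htail := dnorm_tail_bound μ a b ha hb (ξ k) (hbdd k) (α k * x) htpos
        have htp : (0:ℝ) < (α k * x) ^ (a*b) := Real.rpow_pos_of_pos htpos _
        have hPle : (μ {ω | α k * x < |ξ k ω|}).toReal ≤ n k ^ (2*a) / (α k * x) ^ (a*b) := by
          rw [le_div_iff₀ htp]
          linarith [htail]
        have hcalc : n k ^ (2*a) / (α k * x) ^ (a*b) = n k ^ c * (S ^ (a*b) / x ^ (a*b)) := by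
          have hnc : n k ^ (2*a) = n k ^ c * n k ^ (c*(a*b)) := by
            rw [← Real.rpow_add hkpos]
            congr 1
            rw [hc]
            field_simp
            ring
          rw [Real.mul_rpow hαpos.le hxpos.le, hα,
            Real.div_rpow (Real.rpow_nonneg (hn0 k) c) hS0,
            ← Real.rpow_mul (hn0 k), hnc]
          have h1 : n k ^ (c*(a*b)) ≠ 0 := (Real.rpow_pos_of_pos hkpos _).ne'
          have h2 : x ^ (a*b) ≠ 0 := (Real.rpow_pos_of_pos hxpos _).ne'
          have h3 : S ^ (a*b) ≠ 0 := (Real.rpow_pos_of_pos hSpos _).ne'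
          field_simp
        rw [hcalc] at hPle
        calc μ {ω | α k * x < |ξ k ω|}
            = ENNReal.ofReal ((μ {ω | α k * x < |ξ k ω|}).toReal) :=
              (ENNReal.ofReal_toReal (measure_ne_top μ _)).symm
        _ ≤ ENNReal.ofReal (n k ^ c * (S ^ (a*b) / x ^ (a*b))) := ENNReal.ofReal_le_ofReal hPle
    -- assemble
    have hcsum : Summable fun k => n k ^ c * (S ^ (a*b) / x ^ (a*b)) := hsum.mul_right _
    have hfinal : μ {ω | x < |∑' k, ξ k ω|} ≤ ENNReal.ofReal (S ^ (a*b+1) / x ^ (a*b)) := by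
      calc μ {ω | x < |∑' k, ξ k ω|} ≤ μ (⋃ k, {ω | α k * x < |ξ k ω|}) := measure_mono hsub
      _ ≤ ∑' k, μ {ω | α k * x < |ξ k ω|} := measure_iUnion_le _
      _ ≤ ∑' k, ENNReal.ofReal (n k ^ c * (S ^ (a*b) / x ^ (a*b))) :=
          ENNReal.tsum_le_tsum hkey
      _ = ENNReal.ofReal (∑' k, n k ^ c * (S ^ (a*b) / x ^ (a*b))) :=
          (ENNReal.ofReal_tsum_of_nonneg
            (fun k => mul_nonneg (Real.rpow_nonneg (hn0 k) c)
              (div_nonneg (Real.rpow_nonneg hS0 _) (Real.rpow_nonneg hx0 _))) hcsum).symm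
      _ = ENNReal.ofReal (S ^ (a*b+1) / x ^ (a*b)) := by
          congr 1
          rw [tsum_mul_right, ← hS]
          rw [← mul_div_assoc]
          congr 1
          rw [← Real.rpow_one_add' hS0 (by positivity)]
          ring_nf
    exact ENNReal.toReal_le_of_le_ofReal hRHSnn hfinal
end

section
/- For the space D_{V,W}(Ω) with W(x) = |x|^a and V(x) = |x|^b (a, b > 0), the majorizing characteristic satisfies κ(n) = sup_{0<t<1/n} (W^{(−1)}(tn)/W^{(−1)}(t))^{1/2} = n^{1/(2a)}: i.e., for any ξ₁,…,ξₙ with finite prenorms, ‖max_{1≤i≤n}|ξ_i|‖_{V,W} ≤ n^{1/(2a)} max_{1≤i≤n} ‖ξ_i‖_{V,W}. -/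
open MeasureTheory Real

theorem stmt19 {Ω : Type*} [MeasurableSpace Ω] (μ : Measure Ω) [IsProbabilityMeasure μ]
    (a b : ℝ) (ha : 0 < a) (hb : 0 < b)
    (n : ℕ) (hn : 0 < n)
    (ξ : Fin n → Ω → ℝ) (hmeas : ∀ i, Measurable (ξ i))
    (hbdd : ∀ i, BddAbove (Set.range fun x : {x : ℝ // 0 < x} =>
      x.1 ^ b * ((μ {ω | x.1 < |ξ i ω|}).toReal) ^ (1 / a))) :
    (⨆ t : {t : ℝ // 0 < t ∧ t < 1 / (n : ℝ)},
        ((t.1 * (n : ℝ)) ^ (1 / a) / t.1 ^ (1 / a)) ^ ((1 : ℝ) / 2)) = (n : ℝ) ^ (1 / (2 * a)) ∧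
    Dnorm μ a b (fun ω => ⨆ i, |ξ i ω|) ≤
      (n : ℝ) ^ (1 / (2 * a)) * ⨆ i, Dnorm μ a b (ξ i) := by
  have hn' : (0 : ℝ) < n := Nat.cast_pos.mpr hn
  have hxne : Nonempty {x : ℝ // 0 < x} := ⟨⟨1, one_pos⟩⟩
  have hfinne : Nonempty (Fin n) := ⟨⟨0, hn⟩⟩
  have hsqrt : Real.sqrt ((n : ℝ) ^ (1 / a)) = (n : ℝ) ^ (1 / (2 * a)) := by
    rw [Real.sqrt_eq_rpow, ← Real.rpow_mul hn'.le]
    congr 1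
    field_simp
  constructor
  · have htne : Nonempty {t : ℝ // 0 < t ∧ t < 1 / (n : ℝ)} := by
      refine ⟨⟨1 / (2 * n), by positivity, ?_⟩⟩
      rw [div_lt_div_iff₀ (by positivity) hn']
      nlinarith
    have hconst : ∀ t : {t : ℝ // 0 < t ∧ t < 1 / (n : ℝ)},
        ((t.1 * (n : ℝ)) ^ (1 / a) / t.1 ^ (1 / a)) ^ ((1 : ℝ) / 2)
          = (n : ℝ) ^ (1 / (2 * a)) := by
      intro t
      have ht : 0 < t.1 := t.2.1
      have htpow : t.1 ^ (1 / a) ≠ 0 := (Real.rpow_pos_of_pos ht _).ne'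
      rw [Real.mul_rpow ht.le hn'.le, mul_div_cancel_left₀ _ htpow,
        ← Real.rpow_mul hn'.le]
      congr 1
      field_simp
    calc (⨆ t : {t : ℝ // 0 < t ∧ t < 1 / (n : ℝ)},
          ((t.1 * (n : ℝ)) ^ (1 / a) / t.1 ^ (1 / a)) ^ ((1 : ℝ) / 2))
        = ⨆ _ : {t : ℝ // 0 < t ∧ t < 1 / (n : ℝ)}, (n : ℝ) ^ (1 / (2 * a)) :=
          iSup_congr hconst
      _ = (n : ℝ) ^ (1 / (2 * a)) := ciSup_const
  · set S : Fin n → {x : ℝ // 0 < x} → ℝ := fun i x =>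
      x.1 ^ b * ((μ {ω | x.1 < |ξ i ω|}).toReal) ^ (1 / a) with hS
    have hS0 : ∀ i x, 0 ≤ S i x := by
      intro i x
      have := x.2
      positivity
    set M : Fin n → ℝ := fun i => ⨆ x, S i x with hM
    have hM0 : ∀ i, 0 ≤ M i := fun i =>
      le_trans (hS0 i ⟨1, one_pos⟩) (le_ciSup (hbdd i) _)
    obtain ⟨i₀, hi₀⟩ := Finite.exists_max M
    -- pointwise bound
    have hkey : ∀ x : {x : ℝ // 0 < x},
        x.1 ^ b * ((μ {ω | x.1 < ⨆ i, |ξ i ω|}).toReal) ^ (1 / a)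
          ≤ (n : ℝ) ^ (1 / a) * M i₀ := by
      intro x
      have hxb : (0 : ℝ) < x.1 ^ b := Real.rpow_pos_of_pos x.2 _
      -- each tail measure is bounded
      have hμi : ∀ i, (μ {ω | x.1 < |ξ i ω|}).toReal ≤ (M i₀ / x.1 ^ b) ^ a := by
        intro i
        have h1 : S i x ≤ M i₀ := le_trans (le_ciSup (hbdd i) x) (hi₀ i)
        have h2 : ((μ {ω | x.1 < |ξ i ω|}).toReal) ^ (1 / a) ≤ M i₀ / x.1 ^ b := by
          rw [le_div_iff₀ hxb]
          calc ((μ {ω | x.1 < |ξ i ω|}).toReal) ^ (1 / a) * x.1 ^ b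
              = S i x := by rw [hS]; ring
            _ ≤ M i₀ := h1
        have h3 := Real.rpow_le_rpow (by positivity) h2 ha.le
        rwa [← Real.rpow_mul (by positivity), one_div, inv_mul_cancel₀ ha.ne',
          Real.rpow_one] at h3
      -- union bound
      have hsub : {ω | x.1 < ⨆ i, |ξ i ω|} ⊆ ⋃ i, {ω | x.1 < |ξ i ω|} := by
        intro ω hω
        have hbddr : BddAbove (Set.range fun i => |ξ i ω|) :=
          (Set.finite_range _).bddAbove
        obtain ⟨i, hi⟩ := (lt_ciSup_iff hbddr).mp hω
        exact Set.mem_iUnion.mpr ⟨i, hi⟩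
      have hμle : (μ {ω | x.1 < ⨆ i, |ξ i ω|}).toReal
          ≤ ∑ i : Fin n, (μ {ω | x.1 < |ξ i ω|}).toReal := by
        rw [← ENNReal.toReal_sum (fun i _ => measure_ne_top μ _)]
        refine ENNReal.toReal_mono (by
          exact (ENNReal.sum_lt_top.mpr fun i _ => measure_lt_top μ _).ne) ?_
        calc μ {ω | x.1 < ⨆ i, |ξ i ω|} ≤ μ (⋃ i, {ω | x.1 < |ξ i ω|}) :=
              measure_mono hsub
          _ ≤ ∑' i, μ {ω | x.1 < |ξ i ω|} := measure_iUnion_le _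
          _ = ∑ i : Fin n, μ {ω | x.1 < |ξ i ω|} := tsum_fintype _
      have hμtot : (μ {ω | x.1 < ⨆ i, |ξ i ω|}).toReal
          ≤ (n : ℝ) * (M i₀ / x.1 ^ b) ^ a := by
        calc (μ {ω | x.1 < ⨆ i, |ξ i ω|}).toReal
            ≤ ∑ i : Fin n, (μ {ω | x.1 < |ξ i ω|}).toReal := hμle
          _ ≤ ∑ _i : Fin n, (M i₀ / x.1 ^ b) ^ a :=
              Finset.sum_le_sum fun i _ => hμi i
          _ = (n : ℝ) * (M i₀ / x.1 ^ b) ^ a := by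
              rw [Finset.sum_const, Finset.card_univ, Fintype.card_fin,
                nsmul_eq_mul]
      have hdiv0 : 0 ≤ M i₀ / x.1 ^ b := div_nonneg (hM0 i₀) hxb.le
      have h4 : ((μ {ω | x.1 < ⨆ i, |ξ i ω|}).toReal) ^ (1 / a)
          ≤ (n : ℝ) ^ (1 / a) * (M i₀ / x.1 ^ b) := by
        calc ((μ {ω | x.1 < ⨆ i, |ξ i ω|}).toReal) ^ (1 / a)
            ≤ ((n : ℝ) * (M i₀ / x.1 ^ b) ^ a) ^ (1 / a) :=
              Real.rpow_le_rpow (by positivity) hμtot (by positivity)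
          _ = (n : ℝ) ^ (1 / a) * (M i₀ / x.1 ^ b) := by
              rw [Real.mul_rpow hn'.le (by positivity),
                ← Real.rpow_mul hdiv0, mul_one_div, div_self ha.ne',
                Real.rpow_one]
      calc x.1 ^ b * ((μ {ω | x.1 < ⨆ i, |ξ i ω|}).toReal) ^ (1 / a)
          ≤ x.1 ^ b * ((n : ℝ) ^ (1 / a) * (M i₀ / x.1 ^ b)) :=
            mul_le_mul_of_nonneg_left h4 hxb.le
        _ = (n : ℝ) ^ (1 / a) * M i₀ := by
            field_simp
    -- conclude
    have hsup : (⨆ x : {x : ℝ // 0 < x},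
        x.1 ^ b * ((μ {ω | x.1 < ⨆ i, |ξ i ω|}).toReal) ^ (1 / a))
          ≤ (n : ℝ) ^ (1 / a) * M i₀ := ciSup_le hkey
    have h5 : Dnorm μ a b (fun ω => ⨆ i, |ξ i ω|)
        ≤ (n : ℝ) ^ (1 / (2 * a)) * Real.sqrt (M i₀) := by
      have habs : ∀ ω, abs (⨆ i, |ξ i ω|) = ⨆ i, |ξ i ω| := by
        intro ω
        refine abs_of_nonneg (le_trans (abs_nonneg (ξ ⟨0, hn⟩ ω)) ?_)
        exact le_ciSup (f := fun i => |ξ i ω|) ((Set.finite_range _).bddAbove) ⟨0, hn⟩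
      unfold Dnorm
      simp only [habs]
      calc Real.sqrt (⨆ x : {x : ℝ // 0 < x},
            x.1 ^ b * ((μ {ω | x.1 < ⨆ i, |ξ i ω|}).toReal) ^ (1 / a))
          ≤ Real.sqrt ((n : ℝ) ^ (1 / a) * M i₀) := Real.sqrt_le_sqrt hsup
        _ = (n : ℝ) ^ (1 / (2 * a)) * Real.sqrt (M i₀) := by
            rw [Real.sqrt_mul (by positivity), hsqrt]
    refine h5.trans ?_
    have h6 : Real.sqrt (M i₀) ≤ ⨆ i, Dnorm μ a b (ξ i) := by
      have : Real.sqrt (M i₀) = Dnorm μ a b (ξ i₀) := rfl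
      rw [this]
      exact le_ciSup (f := fun i => Dnorm μ a b (ξ i))
        ((Set.finite_range _).bddAbove) i₀
    exact mul_le_mul_of_nonneg_left h6 (by positivity)
end
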